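/- arXiv:2401.00655 — 7 statements merged into one kernel-verified Lean document; each statement's English description precedes it below -/
import Mathlib

section
/- Let H : ℝ^{2n} → ℝ be convex with H(x)/|x|² → 0 as x → 0, and suppose H is differentiable with ∇H ≠ 0 away from a neighborhood of 0 in the sense that η := inf{|∇H(x)| : |x| ≥ δ} > 0 for appropriate δ. Then the Fenchel conjugate G satisfies G(y)/|y|² → +∞ as y → 0. More precisely: for every ε > 0 there is η > 0 such that G(y) ≥ |y|²/(4ε) for all |y| < η. -/
open scoped RealInnerProductSpace

/-- If `H(x)/|x|² → 0` as `x → 0`, the Fenchel conjugate `G` satisfies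
`G(y)/|y|² → +∞` as `y → 0`, in the precise quantitative form below. -/
theorem stmt_1 (n : ℕ) (H G : EuclideanSpace ℝ (Fin (2*n)) → ℝ)
    (hconv : StrictConvexOn ℝ Set.univ H) (hC1 : ContDiff ℝ 1 H)
    (hH0 : H 0 = 0)
    (hlim : Filter.Tendsto (fun x => H x / ‖x‖ ^ 2)
      (nhdsWithin 0 {(0 : EuclideanSpace ℝ (Fin (2*n)))}ᶜ) (nhds 0))
    (hG : ∀ y, IsLUB {r : ℝ | ∃ x, r = ⟪x, y⟫ - H x} (G y)) :
    ∀ ε > 0, ∃ η > 0, ∀ y, ‖y‖ < η → ‖y‖ ^ 2 / (4 * ε) ≤ G y := by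
  intro ε hε
  rw [Metric.tendsto_nhdsWithin_nhds] at hlim
  obtain ⟨δ, hδ, hδ'⟩ := hlim ε hε
  refine ⟨2 * ε * δ, by positivity, fun y hy => ?_⟩
  have hub := (hG y).1
  by_cases h0 : y = 0
  · subst h0
    have h1 : (0:ℝ) ∈ {r : ℝ | ∃ x, r = ⟪x, (0:EuclideanSpace ℝ (Fin (2*n)))⟫ - H x} :=
      ⟨0, by simp [hH0]⟩
    have := hub h1
    simpa using this
  · set x : EuclideanSpace ℝ (Fin (2*n)) := (1/(2*ε)) • y with hx
    have hxnorm : ‖x‖ = ‖y‖ / (2*ε) := by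
      rw [hx, norm_smul]
      rw [Real.norm_eq_abs, abs_of_pos (by positivity : (0:ℝ) < 1/(2*ε))]
      field_simp
    have hxne : x ≠ 0 := by
      simp [hx, smul_eq_zero, h0]
      positivity
    have hxdist : dist x 0 < δ := by
      rw [dist_zero_right, hxnorm, div_lt_iff₀ (by positivity)]
      calc ‖y‖ < 2 * ε * δ := hy
        _ = δ * (2*ε) := by ring
    have hsmall := hδ' hxne hxdist
    rw [Real.dist_eq, sub_zero] at hsmall
    have hxpos : 0 < ‖x‖ := norm_pos_iff.mpr hxne
    have hHx : H x ≤ ε * ‖x‖ ^ 2 := by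
      have := (abs_lt.mp hsmall).2
      rw [div_lt_iff₀ (by positivity)] at this
      linarith [this]
    have hinner : ⟪x, y⟫ = ‖y‖ ^ 2 / (2*ε) := by
      rw [hx, real_inner_smul_left, real_inner_self_eq_norm_sq]
      ring
    have hmem : ⟪x, y⟫ - H x ∈ {r : ℝ | ∃ x, r = ⟪x, y⟫ - H x} := ⟨x, rfl⟩
    have hle := hub hmem
    have : ‖y‖ ^ 2 / (4 * ε) ≤ ⟪x, y⟫ - H x := by
      rw [hinner]
      have : ε * ‖x‖ ^ 2 = ‖y‖ ^ 2 / (4 * ε) := by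
        rw [hxnorm]
        field_simp
        ring
      have h2 : ‖y‖ ^ 2 / (2*ε) = 2 * (‖y‖ ^ 2 / (4 * ε)) := by
        field_simp; ring
      linarith [hHx, this, h2]
    linarith
end

section
/- Minimal period criterion: suppose ψ(x) = (1/2)∫₀ᵀ|ẋ|²dt - ∫₀ᵀ V(x)dt on a subspace E of T-periodic W^{1,2} functions that is invariant under the rescaling x(t) ↦ x(t/k) for integers k ≥ 1 (applied to T/k-periodic elements). If x̄ ∈ E is a nonconstant critical point of ψ satisfying ψ(x̄) = max_{s≥0} ψ(s x̄) = inf_{‖e‖=1} max_{s≥0} ψ(s e), then x̄ cannot have period T/k for any integer k ≥ 2; that is, the minimal period of x̄ is T. -/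
/-!
If `x̄` had period `T/k`, the slowed-down loop `y(t) = x̄(t/k)` would lie in `E` with the same
potential term as `x̄` but only `1/k²` of its kinetic term, so `ψ(s y) < ψ(s x̄) ≤ ψ(x̄)` for all
`s > 0`. The inf-max property gives some `s ≥ 0` with `ψ(x̄) ≤ ψ(s y)`; hence `s = 0`, and
`ψ(x̄) ≤ ψ(0) = 0` contradicts `ψ(x̄) > 0`.
-/

open MeasureTheory intervalIntegral Function

section

variable {F : Type*} [NormedAddCommGroup F] [NormedSpace ℝ F]

theorem Function.Periodic.deriv {f : ℝ → F} {c : ℝ} (h : Periodic f c) :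
    Periodic (deriv f) c := fun t => by
  rw [← deriv_comp_add_const, funext h]

theorem Function.Periodic.intervalIntegral_comp_div_natCast {f : ℝ → F} {T : ℝ} {k : ℕ}
    (hk : k ≠ 0) (hf : Periodic f (T / k))
    (hfi : ∀ a b, IntervalIntegrable f volume a b) :
    ∫ t in 0..T, f (t / k) = ∫ t in 0..T, f t := by
  have hk0 : (k : ℝ) ≠ 0 := Nat.cast_ne_zero.mpr hk
  have hsum := hf.intervalIntegral_add_zsmul_eq k 0 hfi
  simp only [zero_add, ← Int.cast_smul_eq_zsmul ℝ, Int.cast_natCast, smul_eq_mul,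
    mul_div_cancel₀ T hk0] at hsum
  rw [integral_comp_div f hk0, zero_div, hsum]

/-- The square `‖x‖²` of the norm of `E`. -/
noncomputable def dirichletIntegral (T : ℝ) (x : ℝ → F) : ℝ :=
  ∫ t in 0..T, ‖deriv x t‖ ^ 2

theorem dirichletIntegral_smul (T s : ℝ) (x : ℝ → F) :
    dirichletIntegral T (s • x) = s ^ 2 * dirichletIntegral T x := by
  simp only [dirichletIntegral, deriv_const_smul_field, norm_smul, mul_pow, Real.norm_eq_abs,
    sq_abs, intervalIntegral.integral_const_mul]

theorem dirichletIntegral_comp_div_natCast {T : ℝ} {k : ℕ} (hk : k ≠ 0) {x : ℝ → F}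
    (hx : Continuous (deriv x)) (hper : Periodic x (T / k)) :
    dirichletIntegral T (fun t => x (t / k)) = ((k : ℝ)⁻¹) ^ 2 * dirichletIntegral T x := by
  have hderiv : ∀ t, deriv (fun t => x (t / k)) t = (k : ℝ)⁻¹ • deriv x (t / k) := fun t => by
    simp only [div_eq_inv_mul]
    exact deriv_comp_mul_left _ x t
  simp only [dirichletIntegral, hderiv, norm_smul, mul_pow, Real.norm_eq_abs, sq_abs,
    intervalIntegral.integral_const_mul]
  congr 1
  exact (hper.deriv.comp fun v => ‖v‖ ^ 2).intervalIntegral_comp_div_natCast hk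
    fun a b => ((continuous_norm.pow 2).comp hx).intervalIntegrable a b

theorem dirichletIntegral_pos {T : ℝ} (hT : 0 < T) {x : ℝ → F} (hx : ContDiff ℝ 1 x)
    (hper : Periodic x T) (hnc : ¬ ∀ s t, x s = x t) : 0 < dirichletIntegral T x := by
  obtain ⟨t₁, ht₁⟩ : ∃ t, deriv x t ≠ 0 := by
    by_contra! h
    exact hnc (is_const_of_deriv_eq_zero (hx.differentiable one_ne_zero) h)
  obtain ⟨t₀, ht₀, hval⟩ := hper.deriv.exists_mem_Ico₀ hT t₁
  refine integral_pos hT ((hx.continuous_deriv le_rfl).norm.pow 2).continuousOn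
    (fun _ _ => sq_nonneg _) ⟨t₀, Set.Ico_subset_Icc_self ht₀, ?_⟩
  rw [← hval]
  positivity

noncomputable def action (T : ℝ) (V : F → ℝ) (x : ℝ → F) : ℝ :=
  1 / 2 * dirichletIntegral T x - ∫ t in 0..T, V (x t)

theorem action_smul_comp_div_natCast {T : ℝ} {V : F → ℝ} (hV : Continuous V) {k : ℕ}
    (hk : k ≠ 0) {x : ℝ → F} (hx : ContDiff ℝ 1 x) (hper : Periodic x (T / k)) (s : ℝ) :
    action T V (s • fun t => x (t / k)) =
      action T V (s • x) - (1 - ((k : ℝ)⁻¹) ^ 2) / 2 * s ^ 2 * dirichletIntegral T x := by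
  have hpot : ∫ t in 0..T, V (s • x (t / k)) = ∫ t in 0..T, V (s • x t) :=
    (hper.comp fun v => V (s • v)).intervalIntegral_comp_div_natCast hk fun a b =>
      (hV.comp (continuous_const.smul hx.continuous)).intervalIntegrable a b
  simp only [action, dirichletIntegral_smul,
    dirichletIntegral_comp_div_natCast hk (hx.continuous_deriv le_rfl) hper, Pi.smul_apply, hpot]
  ring

end

theorem stmt_10_general (T : ℝ) (hT : 0 < T) (N : ℕ)
    (V : EuclideanSpace ℝ (Fin N) → ℝ) (hV : Continuous V) (hV0 : V 0 = 0)
    (E : Set (ℝ → EuclideanSpace ℝ (Fin N)))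
    (hE : ∀ x ∈ E, ContDiff ℝ 1 x ∧ Function.Periodic x T)
    (hresc : ∀ x ∈ E, ∀ k : ℕ, 2 ≤ k → Function.Periodic x (T / k) →
      (fun t => x (t / k)) ∈ E)
    (ψ : (ℝ → EuclideanSpace ℝ (Fin N)) → ℝ)
    (hψ : ∀ x, ψ x = (1/2) * (∫ t in (0:ℝ)..T, ‖deriv x t‖ ^ 2) -
      ∫ t in (0:ℝ)..T, V (x t))
    (xbar : ℝ → EuclideanSpace ℝ (Fin N)) (hx : xbar ∈ E)
    (hnc : ¬ ∀ s t : ℝ, xbar s = xbar t)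
    (hpos : 0 < ψ xbar)
    (hmax : ∀ s : ℝ, 0 ≤ s → ψ (s • xbar) ≤ ψ xbar)
    (hinf : ∀ e ∈ E, e ≠ 0 → ∃ s : ℝ, 0 ≤ s ∧
      (∀ s' : ℝ, 0 ≤ s' → ψ (s' • e) ≤ ψ (s • e)) ∧ ψ xbar ≤ ψ (s • e)) :
    ¬ ∃ k : ℕ, 2 ≤ k ∧ Function.Periodic xbar (T / k) := by
  rintro ⟨k, hk, hper⟩
  obtain rfl : ψ = action T V := funext hψ
  obtain ⟨hxC, hxT⟩ := hE xbar hx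
  have hk0 : (k : ℝ) ≠ 0 := by positivity
  have hy0 : (fun t => xbar (t / k)) ≠ 0 := fun h =>
    hnc fun s t => by simpa [hk0] using (congrFun h (s * k)).trans (congrFun h (t * k)).symm
  obtain ⟨s, hs, -, hle⟩ := hinf _ (hresc xbar hx k hk hper) hy0
  rw [action_smul_comp_div_natCast hV (by positivity) hxC hper] at hle
  have hgap : 0 < (1 - ((k : ℝ)⁻¹) ^ 2) / 2 * dirichletIntegral T xbar :=
    mul_pos (half_pos (sub_pos.mpr (pow_lt_one₀ (by positivity)
      (inv_lt_one_of_one_lt₀ (by exact_mod_cast hk)) two_ne_zero)))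
      (dirichletIntegral_pos hT hxC hxT hnc)
  obtain rfl : s = 0 :=
    pow_eq_zero_iff two_ne_zero |>.mp <| le_antisymm
      (nonpos_of_mul_nonpos_left (by linarith [hmax s hs]) hgap) (sq_nonneg s)
  have haction_zero : action T V 0 = 0 := by simp [action, dirichletIntegral, hV0]
  rw [zero_smul, haction_zero] at hle
  linarith

/-- Minimal period criterion: an exactly inf-max critical point `x̄` of the action
functional `ψ` on a rescaling-invariant subspace `E` of `T`-periodic `W^{1,2}`
functions cannot have period `T/k` for any integer `k ≥ 2`. -/
theorem stmt_10 (T : ℝ) (hT : 0 < T) (N : ℕ)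
    (V : EuclideanSpace ℝ (Fin N) → ℝ) (hV : Continuous V) (hV0 : V 0 = 0)
    (E : Set (ℝ → EuclideanSpace ℝ (Fin N)))
    (hE : ∀ x ∈ E, ContDiff ℝ 1 x ∧ Function.Periodic x T)
    (hsmul : ∀ x ∈ E, ∀ c : ℝ, c • x ∈ E)
    (hresc : ∀ x ∈ E, ∀ k : ℕ, 2 ≤ k → Function.Periodic x (T / k) →
      (fun t => x (t / k)) ∈ E)
    (ψ : (ℝ → EuclideanSpace ℝ (Fin N)) → ℝ)
    (hψ : ∀ x, ψ x = (1/2) * (∫ t in (0:ℝ)..T, ‖deriv x t‖ ^ 2) -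
      ∫ t in (0:ℝ)..T, V (x t))
    (xbar : ℝ → EuclideanSpace ℝ (Fin N)) (hx : xbar ∈ E)
    (hnc : ¬ ∀ s t : ℝ, xbar s = xbar t)
    (hpos : 0 < ψ xbar)
    (hmax : ∀ s : ℝ, 0 ≤ s → ψ (s • xbar) ≤ ψ xbar)
    (hinf : ∀ e ∈ E, e ≠ 0 → ∃ s : ℝ, 0 ≤ s ∧
      (∀ s' : ℝ, 0 ≤ s' → ψ (s' • e) ≤ ψ (s • e)) ∧ ψ xbar ≤ ψ (s • e)) :
    ¬ ∃ k : ℕ, 2 ≤ k ∧ Function.Periodic xbar (T / k) :=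
  stmt_10_general T hT N V hV hV0 E hE hresc ψ hψ xbar hx hnc hpos hmax hinf
end

section
/- Let φ : [0,∞) → ℝ be C¹ with φ(0) = 0, φ(ρ) > 0 for some ρ > 0, φ(s) → -∞ as s → ∞, and suppose φ'(s) = s·g(s) where g is non-increasing on (0,∞). Then the zero set of φ' in (0,∞) is a nonempty bounded interval (possibly a single point), and φ attains its global maximum, which is positive, exactly on this set, being strictly increasing before it and strictly decreasing after it. -/
open Filter

/-- One-dimensional structure result: if `φ` is `C¹` on `[0,∞)` with `φ(0) = 0`,
`φ(ρ) > 0` for some `ρ > 0`, `φ(s) → -∞`, and `φ'(s) = s·g(s)` with `g`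
non-increasing on `(0,∞)`, then the zero set of `φ'` in `(0,∞)` is a nonempty
bounded convex set on which `φ` attains its positive global maximum, `φ` being
strictly increasing before it and strictly decreasing after it. -/
theorem stmt_12 (φ φ' g : ℝ → ℝ)
    (hC1 : ContDiffOn ℝ 1 φ (Set.Ici 0))
    (hderiv : ∀ s > 0, HasDerivAt φ (φ' s) s)
    (hφ0 : φ 0 = 0)
    (hρ : ∃ ρ > 0, 0 < φ ρ)
    (hbot : Tendsto φ atTop atBot)
    (hg : AntitoneOn g (Set.Ioi 0))
    (hfact : ∀ s > 0, φ' s = s * g s) :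
    {s : ℝ | 0 < s ∧ φ' s = 0}.Nonempty ∧
    Convex ℝ {s : ℝ | 0 < s ∧ φ' s = 0} ∧
    Bornology.IsBounded {s : ℝ | 0 < s ∧ φ' s = 0} ∧
    ∃ m : ℝ, 0 < m ∧ (∀ s ∈ {s : ℝ | 0 < s ∧ φ' s = 0}, φ s = m) ∧
      (∀ s : ℝ, 0 ≤ s → φ s ≤ m) ∧
      StrictMonoOn φ (Set.Icc 0 (sInf {s : ℝ | 0 < s ∧ φ' s = 0})) ∧
      StrictAntiOn φ (Set.Ici (sSup {s : ℝ | 0 < s ∧ φ' s = 0})) := by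
  obtain ⟨ρ, hρ0, hφρ⟩ := hρ
  set Z := {s : ℝ | 0 < s ∧ φ' s = 0} with hZdef
  have contφ : ContinuousOn φ (Set.Ici 0) := hC1.continuousOn
  -- g vanishes on Z
  have hg0 : ∀ s ∈ Z, g s = 0 := by
    rintro s ⟨hs0, hs⟩
    have h := hfact s hs0
    rw [hs] at h
    exact (mul_eq_zero.mp h.symm).resolve_left hs0.ne'
  -- φ' vanishes where g does
  have hgz : ∀ s : ℝ, 0 < s → g s = 0 → s ∈ Z := by
    intro s hs0 hgs
    exact ⟨hs0, by rw [hfact s hs0, hgs, mul_zero]⟩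
  -- point c with φ' c > 0
  obtain ⟨c, hcmem, hc⟩ := exists_hasDerivAt_eq_slope φ φ' hρ0
    (contφ.mono (Set.Icc_subset_Ici_self)) (fun x hx => hderiv x hx.1)
  have hφ'c : 0 < φ' c := by
    rw [hc, hφ0, sub_zero, sub_zero]; positivity
  -- point d with φ' d < 0
  obtain ⟨T, hT1, hT2⟩ := ((hbot.eventually (eventually_lt_atBot (φ ρ))).and
    (eventually_gt_atTop ρ)).exists
  obtain ⟨d, hdmem, hd⟩ := exists_hasDerivAt_eq_slope φ φ' hT2
    (contφ.mono (fun x hx => hρ0.le.trans hx.1)) (fun x hx => hderiv x (hρ0.trans hx.1))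
  have hφ'd : φ' d < 0 := by
    rw [hd]
    exact div_neg_of_neg_of_pos (by linarith) (by linarith)
  have hc0 : 0 < c := hcmem.1
  have hd0 : 0 < d := hρ0.trans hdmem.1
  have hgc : 0 < g c := by
    have := hfact c hc0
    nlinarith
  have hgd : g d < 0 := by
    have := hfact d hd0
    nlinarith
  -- Z ⊆ Icc c d
  have hsub : Z ⊆ Set.Icc c d := by
    rintro s ⟨hs0, hs⟩
    have hgs : g s = 0 := hg0 s ⟨hs0, hs⟩
    constructor
    · by_contra hlt
      push_neg at hlt
      have := hg hs0 hc0 hlt.le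
      linarith
    · by_contra hlt
      push_neg at hlt
      have := hg hd0 hs0 hlt.le
      linarith
  have hcd : c < d := hcmem.2.trans hdmem.1
  -- continuity of φ'
  have hcontφ' : ContinuousOn φ' (Set.Ioi 0) := by
    have h1 : ContDiffOn ℝ 1 φ (Set.Ioi 0) := hC1.mono Set.Ioi_subset_Ici_self
    have h2 : ContinuousOn (deriv φ) (Set.Ioi 0) :=
      h1.continuousOn_deriv_of_isOpen isOpen_Ioi le_rfl
    exact h2.congr fun x hx => ((hderiv x hx).deriv).symm
  have hIcc_sub : Set.Icc c d ⊆ Set.Ioi 0 := fun x hx => lt_of_lt_of_le hc0 hx.1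
  -- nonempty
  have hne : Z.Nonempty := by
    have := intermediate_value_Icc' hcd.le (hcontφ'.mono hIcc_sub)
    obtain ⟨x, hx, hx0⟩ := this ⟨hφ'd.le, hφ'c.le⟩
    exact ⟨x, lt_of_lt_of_le hc0 hx.1, hx0⟩
  -- order connected
  have hord : ∀ x ∈ Z, ∀ y ∈ Z, Set.Icc x y ⊆ Z := by
    rintro x hx y hy z ⟨hzx, hzy⟩
    have hx0 := hx.1
    have hz0 : 0 < z := lt_of_lt_of_le hx0 hzx
    have h1 : g z ≤ g x := hg hx0 hz0 hzx
    have h2 : g y ≤ g z := hg hz0 (lt_of_lt_of_le hz0 hzy) hzy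
    rw [hg0 x hx] at h1
    rw [hg0 y hy] at h2
    exact hgz z hz0 (le_antisymm h1 h2)
  have hconv : Convex ℝ Z := by
    rw [convex_iff_ordConnected]
    exact ⟨fun x hx y hy => hord x hx y hy⟩
  have hbdd : Bornology.IsBounded Z := (Metric.isBounded_Icc c d).subset hsub
  -- Z is closed
  have hZeq : Z = Set.Icc c d ∩ φ' ⁻¹' {0} := by
    ext s
    constructor
    · intro hs; exact ⟨hsub hs, hs.2⟩
    · rintro ⟨hs1, hs2⟩; exact ⟨lt_of_lt_of_le hc0 hs1.1, hs2⟩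
  have hZclosed : IsClosed Z := by
    rw [hZeq]
    exact (hcontφ'.mono hIcc_sub).preimage_isClosed_of_isClosed isClosed_Icc isClosed_singleton
  set a := sInf Z with ha
  set b := sSup Z with hb
  have hbddb : BddBelow Z := ⟨c, fun s hs => (hsub hs).1⟩
  have hbdda : BddAbove Z := ⟨d, fun s hs => (hsub hs).2⟩
  have haZ : a ∈ Z := hZclosed.csInf_mem hne hbddb
  have hbZ : b ∈ Z := hZclosed.csSup_mem hne hbdda
  have ha0 : 0 < a := haZ.1
  have hb0 : 0 < b := hbZ.1
  -- strict monotone on Icc 0 a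
  have hmono : StrictMonoOn φ (Set.Icc 0 a) := by
    apply strictMonoOn_of_deriv_pos (convex_Icc 0 a)
      (contφ.mono (Set.Icc_subset_Ici_self))
    intro x hx
    rw [interior_Icc] at hx
    rw [(hderiv x hx.1).deriv, hfact x hx.1]
    have h1 : g a ≤ g x := hg hx.1 ha0 hx.2.le
    rw [hg0 a haZ] at h1
    rcases h1.lt_or_eq with h | h
    · exact mul_pos hx.1 h
    · exact absurd (csInf_le hbddb (hgz x hx.1 h.symm)) (not_le.mpr hx.2)
  -- strict anti on Ici b
  have hanti : StrictAntiOn φ (Set.Ici b) := by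
    apply strictAntiOn_of_deriv_neg (convex_Ici b)
      (contφ.mono (Set.Ici_subset_Ici.mpr hb0.le))
    intro x hx
    rw [interior_Ici] at hx
    have hx0 : 0 < x := hb0.trans hx
    rw [(hderiv x hx0).deriv, hfact x hx0]
    have h1 : g x ≤ g b := hg hb0 hx0 (le_of_lt hx)
    rw [hg0 b hbZ] at h1
    rcases h1.lt_or_eq with h | h
    · exact mul_neg_of_pos_of_neg hx0 h
    · exact absurd (le_csSup hbdda (hgz x hx0 h)) (not_le.mpr hx)
  -- φ constant on Z
  have hconst : ∀ s ∈ Z, φ s = φ a := by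
    intro s hs
    have has : a ≤ s := csInf_le hbddb hs
    rcases has.lt_or_eq with h | h
    · obtain ⟨ξ, hξmem, hξ⟩ := exists_hasDerivAt_eq_slope φ φ' h
        (contφ.mono (fun x hx => ha0.le.trans hx.1)) (fun x hx => hderiv x (ha0.trans hx.1))
      have hξZ : ξ ∈ Z := hord a haZ s hs ⟨hξmem.1.le, hξmem.2.le⟩
      have : (φ s - φ a) / (s - a) = 0 := by rw [← hξ]; exact hξZ.2
      have hne' : s - a ≠ 0 := sub_ne_zero.mpr h.ne'
      field_simp at this
      linarith
    · rw [h]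
  -- global max
  have hmax : ∀ s : ℝ, 0 ≤ s → φ s ≤ φ a := by
    intro s hs
    rcases le_total s a with h | h
    · exact hmono.monotoneOn ⟨hs, h⟩ ⟨ha0.le, le_refl a⟩ h
    · rcases le_total s b with h2 | h2
      · exact le_of_eq (hconst s (hord a haZ b hbZ ⟨h, h2⟩))
      · calc φ s ≤ φ b := hanti.antitoneOn (Set.self_mem_Ici) h2 h2
          _ = φ a := hconst b hbZ
  refine ⟨hne, hconv, hbdd, φ a, ?_, hconst, hmax, hmono, hanti⟩
  exact lt_of_lt_of_le hφρ (hmax ρ hρ0.le)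
end

section
/- Under the hypotheses of the generalized Nehari theorem — E a real reflexive Banach space, Φ(x) = ½‖x‖² - I(x) with I ∈ C¹ weakly continuous, I(x)/‖x‖² → 0 as x → 0, I(sx)/s² → +∞ uniformly on weakly compact subsets of E∖{0} as s → +∞, and s ↦ I'(sx)x/s non-decreasing for x ≠ 0 — the Nehari set 𝒩 = {x ≠ 0 : Φ'(x)x = 0} is nonempty, bounded away from the origin, and its complement E ∖ 𝒩 has exactly two path-connected components: the set of x with segment [0,x] disjoint from 𝒩, and the set of x with [0,x] meeting 𝒩. -/
/-!
Along a ray `s ↦ s • x` the quotient `I'(sx)x / s` increases, so the fibering map `s ↦ Φ(sx)`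
increases up to the Nehari points of the ray and decreases after them. Hence
`Ω₁ = {0} ∪ {Φ'(x)x > 0}` and `Ω₂ = {x ≠ 0 | Φ'(x)x < 0}`, and `Ω₁` is star-shaped about `0`.
Near `0`, `I = o(‖x‖²)` forces `Φ'(x)x > 0`, which bounds `𝒩` away from the origin. The uniform
superquadratic growth lets one dilation push a compact subset of `E ∖ {0}`, such as a path
avoiding `0` (there is one since `dim E ≥ 2`), into `Ω₂`; so `Ω₂` is nonempty and path-connected.
Finally `Ω₁` and `Ω₂` lie in the closed sets where the fibering map is maximal at `1` on `[0, 1]`,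
resp. on `[1, ∞)`. Away from `0` these meet only at critical points of the fibering map, i.e. on
`𝒩`, so no path in `E ∖ 𝒩` joins the two regions.
-/

open Filter Topology Set

theorem not_joinedIn_of_isClosed {X : Type*} [TopologicalSpace X] {S A B : Set X}
    (hA : IsClosed A) (hB : IsClosed B) (hS : S ⊆ A ∪ B) (hAB : Disjoint (S ∩ A) B)
    {x y : X} (hx : x ∈ A) (hy : y ∈ B) : ¬ JoinedIn S x y := by
  rintro ⟨γ, hγ⟩
  have hγS : range γ ⊆ S := range_subset_iff.2 hγ
  obtain ⟨z, hz, hzA, hzB⟩ := isPreconnected_closed_iff.1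
    (isConnected_range γ.continuous).isPreconnected A B hA hB (hγS.trans hS)
    ⟨x, ⟨0, γ.source⟩, hx⟩ ⟨y, ⟨1, γ.target⟩, hy⟩
  exact hAB.ne_of_mem ⟨hγS hz, hzA⟩ hzB rfl

section Regions

variable {M : Type*} [AddCommGroup M] [Module ℝ M] (N : Set M)

-- `Ω₁` and `Ω₂` of the paper, for an arbitrary set `N` in place of `𝒩`.
def innerRegion : Set M := {x | x ∉ N ∧ ∀ s ∈ Icc (0 : ℝ) 1, s • x ∉ N}

def outerRegion : Set M := {x | x ∉ N ∧ ∃ s ∈ Icc (0 : ℝ) 1, s • x ∈ N}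

theorem innerRegion_union_outerRegion : innerRegion N ∪ outerRegion N = Nᶜ := by
  ext x
  refine ⟨fun h => h.elim And.left And.left, fun hx => ?_⟩
  by_cases h : ∃ s ∈ Icc (0 : ℝ) 1, s • x ∈ N
  exacts [Or.inr ⟨hx, h⟩, Or.inl ⟨hx, fun s hs hsN => h ⟨s, hs, hsN⟩⟩]

theorem disjoint_innerRegion_outerRegion : Disjoint (innerRegion N) (outerRegion N) :=
  disjoint_left.2 fun _ ⟨_, h⟩ ⟨_, s, hs, hsN⟩ => h s hs hsN

theorem starConvex_innerRegion : StarConvex ℝ 0 (innerRegion N) := by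
  rintro y ⟨-, hy⟩ a b ha hb hab
  rw [smul_zero, zero_add]
  have hb1 : b ≤ 1 := by linarith
  refine ⟨hy b ⟨hb, hb1⟩, fun s hs => ?_⟩
  rw [smul_smul]
  exact hy _ ⟨mul_nonneg hs.1 hb, mul_le_one₀ hs.2 hb hb1⟩

theorem isPathConnected_innerRegion [TopologicalSpace M] [IsTopologicalAddGroup M]
    [ContinuousSMul ℝ M] (h0 : (0 : M) ∉ N) : IsPathConnected (innerRegion N) :=
  (starConvex_innerRegion N).isPathConnected ⟨h0, fun s _ => by rwa [smul_zero]⟩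

end Regions

theorem JoinedIn.smul_of_forall_one_le {E : Type*} [NormedAddCommGroup E] [NormedSpace ℝ E]
    {s : Set E} (hs : ∀ x ∈ s, ∀ t : ℝ, 1 ≤ t → t • x ∈ s) {x : E} (hx : x ∈ s) {T : ℝ}
    (hT : 1 ≤ T) : JoinedIn s x (T • x) := by
  refine .of_segment_subset ?_
  rintro _ ⟨a, b, ha, hb, hab, rfl⟩
  rw [smul_smul, ← add_smul]
  exact hs x hx _ (by nlinarith)

theorem map_zero_of_tendsto_div_norm_sq {E : Type*} [NormedAddCommGroup E] [NormedSpace ℝ E]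
    [Nontrivial E] {f : E → ℝ} (hf : ContinuousAt f 0)
    (h : Tendsto (fun x => f x / ‖x‖ ^ 2) (𝓝[≠] 0) (𝓝 0)) : f 0 = 0 := by
  have hnorm : Tendsto (fun x : E => ‖x‖ ^ 2) (𝓝[≠] 0) (𝓝 0) := by
    refine ((Continuous.tendsto' ?_ 0 0 ?_)).mono_left nhdsWithin_le_nhds
    · fun_prop
    · simp
  have hprod : Tendsto (fun x => f x / ‖x‖ ^ 2 * ‖x‖ ^ 2) (𝓝[≠] 0) (𝓝 0) := by
    simpa using h.mul hnorm
  refine tendsto_nhds_unique (hf.tendsto.mono_left nhdsWithin_le_nhds) (hprod.congr' ?_)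
  filter_upwards [self_mem_nhdsWithin] with x hx
  exact div_mul_cancel₀ _ (pow_ne_zero _ (norm_ne_zero_iff.2 hx))

section Nehari

variable {E : Type*} [NormedAddCommGroup E] [NormedSpace ℝ E] {I : E → ℝ}
  {I' : E → E →L[ℝ] ℝ} {x : E}

-- `Φ'(x)x`, for `Φ = energy I`.
def nehariGap (I' : E → E →L[ℝ] ℝ) (x : E) : ℝ := ‖x‖ ^ 2 - I' x x

def nehariSet (I' : E → E →L[ℝ] ℝ) : Set E := {x | x ≠ 0 ∧ nehariGap I' x = 0}

noncomputable def energy (I : E → ℝ) (x : E) : ℝ := ‖x‖ ^ 2 / 2 - I x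

theorem zero_notMem_nehariSet : (0 : E) ∉ nehariSet I' := fun h => h.1 rfl

theorem nehariGap_smul (t : ℝ) (x : E) :
    nehariGap I' (t • x) = t ^ 2 * ‖x‖ ^ 2 - t * I' (t • x) x := by
  rw [nehariGap, norm_smul, Real.norm_eq_abs, mul_pow, sq_abs, map_smul, smul_eq_mul]

theorem energy_smul (t : ℝ) (x : E) : energy I (t • x) = t ^ 2 / 2 * ‖x‖ ^ 2 - I (t • x) := by
  rw [energy, norm_smul, Real.norm_eq_abs, mul_pow, sq_abs]
  ring

theorem continuous_energy (hI : ∀ x, HasFDerivAt I (I' x) x) : Continuous (energy I) :=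
  (continuous_norm.pow 2).div_const 2 |>.sub <|
    continuous_iff_continuousAt.2 fun x => (hI x).continuousAt

theorem hasDerivAt_energy_smul (hI : ∀ x, HasFDerivAt I (I' x) x) (x : E) (t : ℝ) :
    HasDerivAt (fun s : ℝ => energy I (s • x)) (t * ‖x‖ ^ 2 - I' (t • x) x) t := by
  have hray : HasDerivAt (fun s : ℝ => I (s • x)) (I' (t • x) x) t := by
    simpa [Function.comp_def] using
      (hI (t • x)).comp_hasDerivAt t ((hasDerivAt_id t).smul_const x)
  have hsq : HasDerivAt (fun s : ℝ => s ^ 2 / 2 * ‖x‖ ^ 2) (t * ‖x‖ ^ 2) t := by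
    simpa using ((hasDerivAt_pow 2 t).div_const 2).mul_const (‖x‖ ^ 2)
  simp only [energy_smul]
  exact hsq.sub hray

theorem monotoneOn_energy_smul (hI : ∀ x, HasFDerivAt I (I' x) x) {a b : ℝ} (ha : 0 ≤ a)
    (h : ∀ t ∈ Ioo a b, 0 ≤ nehariGap I' (t • x)) :
    MonotoneOn (fun s : ℝ => energy I (s • x)) (Icc a b) := by
  have hd := hasDerivAt_energy_smul hI x
  refine monotoneOn_of_deriv_nonneg (convex_Icc a b)
    (fun t _ => (hd t).continuousAt.continuousWithinAt)
    (fun t _ => (hd t).differentiableAt.differentiableWithinAt) fun t ht => ?_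
  rw [interior_Icc] at ht
  have := h t ht
  rw [nehariGap_smul] at this
  rw [(hd t).deriv]
  nlinarith [ht.1]

theorem antitoneOn_energy_smul (hI : ∀ x, HasFDerivAt I (I' x) x) {a b : ℝ} (ha : 0 ≤ a)
    (h : ∀ t ∈ Ioo a b, nehariGap I' (t • x) ≤ 0) :
    AntitoneOn (fun s : ℝ => energy I (s • x)) (Icc a b) := by
  have hd := hasDerivAt_energy_smul hI x
  refine antitoneOn_of_deriv_nonpos (convex_Icc a b)
    (fun t _ => (hd t).continuousAt.continuousWithinAt)
    (fun t _ => (hd t).differentiableAt.differentiableWithinAt) fun t ht => ?_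
  rw [interior_Icc] at ht
  have := h t ht
  rw [nehariGap_smul] at this
  rw [(hd t).deriv]
  nlinarith [ht.1]

theorem nehariGap_eq_zero_of_forall_energy_smul_le (hI : ∀ x, HasFDerivAt I (I' x) x)
    (h : ∀ s ∈ Ioi (0 : ℝ), energy I (s • x) ≤ energy I x) : nehariGap I' x = 0 := by
  have hmax : IsLocalMax (fun s : ℝ => energy I (s • x)) 1 :=
    eventually_of_mem (Ioi_mem_nhds one_pos) fun s hs => by simpa using h s hs
  simpa [nehariGap] using hmax.hasDerivAt_eq_zero (hasDerivAt_energy_smul hI x 1)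

theorem isClosed_setOf_forall_smul_le {Φ : E → ℝ} (hΦ : Continuous Φ) (J : Set ℝ) :
    IsClosed {x | ∀ s ∈ J, Φ (s • x) ≤ Φ x} := by
  simp only [ofPred_forall]
  exact isClosed_biInter fun s _ => isClosed_le (hΦ.comp (continuous_const_smul s)) hΦ

variable (hmono : ∀ x : E, x ≠ 0 → MonotoneOn (fun s : ℝ => I' (s • x) x / s) (Ioi 0))
include hmono

theorem sq_mul_nehariGap_smul_le (hx : x ≠ 0) {a b : ℝ} (ha : 0 < a) (hab : a ≤ b) :
    a ^ 2 * nehariGap I' (b • x) ≤ b ^ 2 * nehariGap I' (a • x) := by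
  have hb : 0 < b := ha.trans_le hab
  have h := hmono x hx ha hb hab
  rw [div_le_div_iff₀ ha hb] at h
  rw [nehariGap_smul, nehariGap_smul]
  nlinarith [mul_le_mul_of_nonneg_left h (mul_pos ha hb).le]

theorem exists_forall_nehariGap_pos (hI : ∀ x, HasFDerivAt I (I' x) x)
    (hzero : Tendsto (fun x => I x / ‖x‖ ^ 2) (𝓝[≠] (0 : E)) (𝓝 0)) :
    ∃ d > 0, ∀ z : E, z ≠ 0 → ‖z‖ < d → 0 < nehariGap I' z := by
  obtain ⟨δ, hδ, hsmall⟩ := Metric.tendsto_nhdsWithin_nhds.1 hzero (1 / 8) (by norm_num)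
  have hbound : ∀ y : E, y ≠ 0 → ‖y‖ < δ → |I y| < ‖y‖ ^ 2 / 8 := fun y hy hyδ => by
    have hy2 : 0 < ‖y‖ ^ 2 := by positivity
    have h := hsmall hy (by rwa [dist_zero_right])
    rw [Real.dist_eq, sub_zero, abs_div, abs_of_pos hy2, div_lt_iff₀ hy2] at h
    linarith
  refine ⟨δ / 2, half_pos hδ, fun z hz hzδ => ?_⟩
  by_contra! hgap
  -- `Φ'(z)z ≤ 0` propagates outwards along the ray, so `Φ` decreases on `[z, 2z]`;
  -- this is incompatible with `I = o(‖·‖²)`.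
  have hanti := antitoneOn_energy_smul hI (x := z) (b := 2) zero_le_one fun t ht => by
    have := sq_mul_nehariGap_smul_le hmono hz one_pos ht.1.le
    rw [one_smul, one_pow, one_mul] at this
    exact this.trans (mul_nonpos_of_nonneg_of_nonpos (sq_nonneg t) hgap)
  have h12 := hanti (left_mem_Icc.2 one_le_two) (right_mem_Icc.2 one_le_two) one_le_two
  simp only [energy_smul] at h12
  rw [one_smul] at h12
  have hnorm2 : ‖(2 : ℝ) • z‖ = 2 * ‖z‖ := by rw [norm_smul, Real.norm_two]
  have h1 := abs_lt.1 (hbound z hz (by linarith))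
  have h2 := abs_lt.1 (hbound ((2 : ℝ) • z) (smul_ne_zero two_ne_zero hz) (by rw [hnorm2]; linarith))
  rw [hnorm2] at h2
  nlinarith [norm_pos_iff.2 hz]

theorem exists_smul_mem_nehariSet (hI : ∀ x, HasFDerivAt I (I' x) x)
    (hzero : Tendsto (fun x => I x / ‖x‖ ^ 2) (𝓝[≠] (0 : E)) (𝓝 0)) (hx : x ≠ 0)
    (hneg : nehariGap I' x < 0) : ∃ s ∈ Ioo (0 : ℝ) 1, s • x ∈ nehariSet I' := by
  obtain ⟨d, hd, hpos⟩ := exists_forall_nehariGap_pos hmono hI hzero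
  have hnear : ∀ᶠ a in 𝓝 (0 : ℝ), ‖a • x‖ < d ∧ a < 1 := by
    have hcont : Continuous fun a : ℝ => ‖a • x‖ := by fun_prop
    exact (hcont.tendsto' 0 0 (by simp) |>.eventually (gt_mem_nhds hd)).and
      (gt_mem_nhds one_pos)
  obtain ⟨a, ⟨had, ha1⟩, ha0 : 0 < a⟩ :=
    ((hnear.filter_mono nhdsWithin_le_nhds).and (self_mem_nhdsWithin (s := Ioi 0))).exists
  have hga := hpos _ (smul_ne_zero ha0.ne' hx) had
  rw [nehariGap_smul] at hga
  obtain ⟨s, hs, hs0⟩ := exists_hasDerivWithinAt_eq_of_lt_of_gt ha1.le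
    (fun t _ => (hasDerivAt_energy_smul hI x t).hasDerivWithinAt) (m := 0)
    (by nlinarith) (by simpa [nehariGap] using hneg)
  have hs0' : 0 < s := ha0.trans hs.1
  refine ⟨s, ⟨hs0', hs.2⟩, smul_ne_zero hs0'.ne' hx, ?_⟩
  rw [nehariGap_smul]
  linear_combination s * hs0

theorem mem_outerRegion_nehariSet_iff (hI : ∀ x, HasFDerivAt I (I' x) x)
    (hzero : Tendsto (fun x => I x / ‖x‖ ^ 2) (𝓝[≠] (0 : E)) (𝓝 0)) :
    x ∈ outerRegion (nehariSet I') ↔ x ≠ 0 ∧ nehariGap I' x < 0 := by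
  constructor
  · rintro ⟨hxN, s, hs, hsN⟩
    have hx : x ≠ 0 := by
      rintro rfl
      rw [smul_zero] at hsN
      exact zero_notMem_nehariSet hsN
    have hs0 : 0 < s := hs.1.lt_of_ne <| by
      rintro rfl
      rw [zero_smul] at hsN
      exact zero_notMem_nehariSet hsN
    have hle := sq_mul_nehariGap_smul_le hmono hx hs0 hs.2
    rw [one_smul, hsN.2, one_pow, one_mul] at hle
    exact ⟨hx, (nonpos_of_mul_nonpos_right hle (by positivity)).lt_of_ne fun h => hxN ⟨hx, h⟩⟩
  · rintro ⟨hx, hneg⟩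
    obtain ⟨s, hs, hsN⟩ := exists_smul_mem_nehariSet hmono hI hzero hx hneg
    exact ⟨fun h => hneg.ne h.2, s, Ioo_subset_Icc_self hs, hsN⟩

theorem smul_mem_outerRegion_nehariSet (hI : ∀ x, HasFDerivAt I (I' x) x)
    (hzero : Tendsto (fun x => I x / ‖x‖ ^ 2) (𝓝[≠] (0 : E)) (𝓝 0))
    (hx : x ∈ outerRegion (nehariSet I')) {t : ℝ} (ht : 1 ≤ t) :
    t • x ∈ outerRegion (nehariSet I') := by
  rw [mem_outerRegion_nehariSet_iff hmono hI hzero] at hx ⊢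
  have hle := sq_mul_nehariGap_smul_le hmono hx.1 one_pos ht
  rw [one_smul, one_pow, one_mul] at hle
  exact ⟨smul_ne_zero (by positivity) hx.1,
    hle.trans_lt (mul_neg_of_pos_of_neg (by positivity) hx.2)⟩

theorem energy_smul_le_of_mem_innerRegion (hI : ∀ x, HasFDerivAt I (I' x) x)
    (hzero : Tendsto (fun x => I x / ‖x‖ ^ 2) (𝓝[≠] (0 : E)) (𝓝 0))
    (hx : x ∈ innerRegion (nehariSet I')) {s : ℝ} (hs : s ∈ Icc (0 : ℝ) 1) :
    energy I (s • x) ≤ energy I x := by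
  rcases eq_or_ne x 0 with rfl | hx0
  · rw [smul_zero]
  have hpos : 0 < nehariGap I' x := by
    refine lt_of_le_of_ne (not_lt.1 fun hneg => ?_) fun h => hx.1 ⟨hx0, h.symm⟩
    exact disjoint_left.1 (disjoint_innerRegion_outerRegion _) hx
      ((mem_outerRegion_nehariSet_iff hmono hI hzero).2 ⟨hx0, hneg⟩)
  have hmon := monotoneOn_energy_smul hI (x := x) (a := 0) (b := 1) le_rfl fun t ht => by
    have := sq_mul_nehariGap_smul_le hmono hx0 ht.1 ht.2.le
    rw [one_smul, one_pow, one_mul] at this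
    exact (mul_nonneg (sq_nonneg t) hpos.le).trans this
  simpa using hmon hs (right_mem_Icc.2 zero_le_one) hs.2

theorem energy_smul_le_of_mem_outerRegion (hI : ∀ x, HasFDerivAt I (I' x) x)
    (hzero : Tendsto (fun x => I x / ‖x‖ ^ 2) (𝓝[≠] (0 : E)) (𝓝 0))
    (hx : x ∈ outerRegion (nehariSet I')) {s : ℝ} (hs : 1 ≤ s) :
    energy I (s • x) ≤ energy I x := by
  have hanti := antitoneOn_energy_smul hI (x := x) (b := s) zero_le_one fun t ht =>
    ((mem_outerRegion_nehariSet_iff hmono hI hzero).1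
      (smul_mem_outerRegion_nehariSet hmono hI hzero hx ht.1.le)).2.le
  simpa using hanti (left_mem_Icc.2 hs) (right_mem_Icc.2 hs) hs

theorem not_joinedIn_innerRegion_outerRegion (hI : ∀ x, HasFDerivAt I (I' x) x)
    (hzero : Tendsto (fun x => I x / ‖x‖ ^ 2) (𝓝[≠] (0 : E)) (𝓝 0)) {x y : E}
    (hx : x ∈ innerRegion (nehariSet I')) (hy : y ∈ outerRegion (nehariSet I')) :
    ¬ JoinedIn (nehariSet I')ᶜ x y := by
  obtain ⟨d, hd, hpos⟩ := exists_forall_nehariGap_pos hmono hI hzero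
  -- On `A ∩ B` the fibering map `s ↦ Φ(s • z)` has a local maximum at `1`.
  set A := {z : E | ∀ s ∈ Icc (0 : ℝ) 1, energy I (s • z) ≤ energy I z}
  set B := {z : E | ∀ s ∈ Ici (1 : ℝ), energy I (s • z) ≤ energy I z} ∩ {z | d ≤ ‖z‖}
  have hinner : innerRegion (nehariSet I') ⊆ A := fun z hz _ hs =>
    energy_smul_le_of_mem_innerRegion hmono hI hzero hz hs
  have houter : outerRegion (nehariSet I') ⊆ B := fun z hz => by
    refine ⟨fun s hs => energy_smul_le_of_mem_outerRegion hmono hI hzero hz hs, ?_⟩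
    obtain ⟨hz0, hneg⟩ := (mem_outerRegion_nehariSet_iff hmono hI hzero).1 hz
    exact not_lt.1 fun h => (hpos z hz0 h).not_gt hneg
  refine not_joinedIn_of_isClosed (isClosed_setOf_forall_smul_le (continuous_energy hI) _)
    ((isClosed_setOf_forall_smul_le (continuous_energy hI) _).inter
      (isClosed_le continuous_const continuous_norm)) ?_ ?_ (hinner hx) (houter hy)
  · rw [← innerRegion_union_outerRegion (nehariSet I')]
    exact union_subset_union hinner houter
  · refine disjoint_left.2 fun z ⟨hzN, hzA⟩ ⟨hzB, hzd⟩ => hzN ⟨norm_pos_iff.1 (hd.trans_le hzd),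
      nehariGap_eq_zero_of_forall_energy_smul_le hI fun s hs => ?_⟩
    rcases le_total s 1 with hs1 | hs1
    exacts [hzA s ⟨hs.le, hs1⟩, hzB s hs1]

theorem exists_forall_smul_mem_outerRegion [Nontrivial E] (hI : ∀ x, HasFDerivAt I (I' x) x)
    (hzero : Tendsto (fun x => I x / ‖x‖ ^ 2) (𝓝[≠] (0 : E)) (𝓝 0))
    (hsup : ∀ K : Set E, K ⊆ {(0 : E)}ᶜ → IsCompact (toWeakSpace ℝ E '' K) →
      ∀ M : ℝ, ∃ s₀ : ℝ, ∀ s : ℝ, s₀ ≤ s → ∀ x ∈ K, M ≤ I (s • x) / s ^ 2)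
    {K : Set E} (hK : IsCompact K) (hK0 : K ⊆ {0}ᶜ) :
    ∃ T : ℝ, 1 ≤ T ∧ ∀ z ∈ K, T • z ∈ outerRegion (nehariSet I') := by
  have hI0 : I 0 = 0 := map_zero_of_tendsto_div_norm_sq (hI 0).continuousAt hzero
  obtain ⟨R, hR⟩ := hK.isBounded.exists_norm_le
  obtain ⟨s₀, hs₀⟩ :=
    hsup K hK0 (hK.image (toWeakSpaceCLM ℝ E).continuous) (R ^ 2 / 2 + 1)
  refine ⟨max s₀ 1, le_max_right _ _, fun z hz => ?_⟩
  set T := max s₀ 1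
  have hT : 0 < T := one_pos.trans_le (le_max_right _ _)
  have hz0 : z ≠ 0 := hK0 hz
  rw [mem_outerRegion_nehariSet_iff hmono hI hzero]
  refine ⟨smul_ne_zero hT.ne' hz0, not_le.1 fun hgap => ?_⟩
  -- Otherwise `Φ'(Tz)(Tz) ≥ 0` propagates inwards, so `Φ` increases on `[0, Tz]`,
  -- bounding `I(Tz)` by `T²‖z‖²/2`, against the choice of `T`.
  have hmon := monotoneOn_energy_smul hI (x := z) (a := 0) (b := T) le_rfl fun t ht =>
    nonneg_of_mul_nonneg_right ((mul_nonneg (sq_nonneg t) hgap).trans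
      (sq_mul_nehariGap_smul_le hmono hz0 ht.1 ht.2.le)) (by positivity)
  have h0T : energy I ((0 : ℝ) • z) ≤ energy I (T • z) :=
    hmon (left_mem_Icc.2 hT.le) (right_mem_Icc.2 hT.le) hT.le
  rw [energy_smul, energy_smul, zero_smul, hI0] at h0T
  have hlarge := hs₀ T (le_max_left _ _) z hz
  rw [le_div_iff₀ (by positivity)] at hlarge
  have hzR : ‖z‖ ^ 2 ≤ R ^ 2 := pow_le_pow_left₀ (norm_nonneg z) (hR z hz) 2
  nlinarith [pow_pos hT 2]

theorem isPathConnected_outerRegion_nehariSet [Nontrivial E]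
    (hI : ∀ x, HasFDerivAt I (I' x) x)
    (hzero : Tendsto (fun x => I x / ‖x‖ ^ 2) (𝓝[≠] (0 : E)) (𝓝 0))
    (hsup : ∀ K : Set E, K ⊆ {(0 : E)}ᶜ → IsCompact (toWeakSpace ℝ E '' K) →
      ∀ M : ℝ, ∃ s₀ : ℝ, ∀ s : ℝ, s₀ ≤ s → ∀ x ∈ K, M ≤ I (s • x) / s ^ 2)
    (hrank : 1 < Module.rank ℝ E) : IsPathConnected (outerRegion (nehariSet I')) := by
  have hscale := fun z (hz : z ∈ outerRegion (nehariSet I')) (t : ℝ) (ht : 1 ≤ t) =>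
    smul_mem_outerRegion_nehariSet hmono hI hzero hz ht
  refine isPathConnected_iff.2 ⟨?_, fun x hx y hy => ?_⟩
  · obtain ⟨z, hz⟩ := exists_ne (0 : E)
    obtain ⟨T, -, hT⟩ := exists_forall_smul_mem_outerRegion hmono hI hzero hsup
      isCompact_singleton (singleton_subset_iff.2 hz)
    exact ⟨_, hT z rfl⟩
  obtain ⟨γ, hγ⟩ := (isPathConnected_compl_singleton_of_one_lt_rank hrank 0).joinedIn x
    ((mem_outerRegion_nehariSet_iff hmono hI hzero).1 hx).1 y
    ((mem_outerRegion_nehariSet_iff hmono hI hzero).1 hy).1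
  obtain ⟨T, hT1, hT⟩ := exists_forall_smul_mem_outerRegion hmono hI hzero hsup
    (isCompact_range γ.continuous) (range_subset_iff.2 hγ)
  have hγT : JoinedIn (outerRegion (nehariSet I')) (T • x) (T • y) :=
    ⟨γ.map (continuous_const_smul T), fun t => hT _ ⟨t, rfl⟩⟩
  exact ((JoinedIn.smul_of_forall_one_le hscale hx hT1).trans hγT).trans
    (JoinedIn.smul_of_forall_one_le hscale hy hT1).symm

end Nehari

theorem stmt_13_general (E : Type*) [NormedAddCommGroup E] [NormedSpace ℝ E] [Nontrivial E]
    (hdim : 2 ≤ Module.rank ℝ E)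
    (I : E → ℝ) (I' : E → E →L[ℝ] ℝ) (hI : ∀ x, HasFDerivAt I (I' x) x)
    (hzero : Tendsto (fun x => I x / ‖x‖ ^ 2) (𝓝[≠] (0 : E)) (𝓝 0))
    (hsup : ∀ K : Set E, K ⊆ {(0 : E)}ᶜ → IsCompact (toWeakSpace ℝ E '' K) →
      ∀ M : ℝ, ∃ s₀ : ℝ, ∀ s : ℝ, s₀ ≤ s → ∀ x ∈ K, M ≤ I (s • x) / s ^ 2)
    (hmono : ∀ x : E, x ≠ 0 →
      MonotoneOn (fun s : ℝ => I' (s • x) x / s) (Set.Ioi 0)) :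
    {x : E | x ≠ 0 ∧ ‖x‖ ^ 2 - I' x x = 0}.Nonempty ∧
    (∃ d > 0, ∀ x ∈ {x : E | x ≠ 0 ∧ ‖x‖ ^ 2 - I' x x = 0}, d ≤ ‖x‖) ∧
    ({x : E | x ∉ {x : E | x ≠ 0 ∧ ‖x‖ ^ 2 - I' x x = 0} ∧
        ∀ s ∈ Set.Icc (0:ℝ) 1, s • x ∉ {x : E | x ≠ 0 ∧ ‖x‖ ^ 2 - I' x x = 0}} ∪
      {x : E | x ∉ {x : E | x ≠ 0 ∧ ‖x‖ ^ 2 - I' x x = 0} ∧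
        ∃ s ∈ Set.Icc (0:ℝ) 1, s • x ∈ {x : E | x ≠ 0 ∧ ‖x‖ ^ 2 - I' x x = 0}}
      = {x : E | x ≠ 0 ∧ ‖x‖ ^ 2 - I' x x = 0}ᶜ) ∧
    Disjoint
      {x : E | x ∉ {x : E | x ≠ 0 ∧ ‖x‖ ^ 2 - I' x x = 0} ∧
        ∀ s ∈ Set.Icc (0:ℝ) 1, s • x ∉ {x : E | x ≠ 0 ∧ ‖x‖ ^ 2 - I' x x = 0}}
      {x : E | x ∉ {x : E | x ≠ 0 ∧ ‖x‖ ^ 2 - I' x x = 0} ∧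
        ∃ s ∈ Set.Icc (0:ℝ) 1, s • x ∈ {x : E | x ≠ 0 ∧ ‖x‖ ^ 2 - I' x x = 0}} ∧
    IsPathConnected
      {x : E | x ∉ {x : E | x ≠ 0 ∧ ‖x‖ ^ 2 - I' x x = 0} ∧
        ∀ s ∈ Set.Icc (0:ℝ) 1, s • x ∉ {x : E | x ≠ 0 ∧ ‖x‖ ^ 2 - I' x x = 0}} ∧
    IsPathConnected
      {x : E | x ∉ {x : E | x ≠ 0 ∧ ‖x‖ ^ 2 - I' x x = 0} ∧
        ∃ s ∈ Set.Icc (0:ℝ) 1, s • x ∈ {x : E | x ≠ 0 ∧ ‖x‖ ^ 2 - I' x x = 0}} ∧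
    ∀ x ∈ {x : E | x ∉ {x : E | x ≠ 0 ∧ ‖x‖ ^ 2 - I' x x = 0} ∧
        ∀ s ∈ Set.Icc (0:ℝ) 1, s • x ∉ {x : E | x ≠ 0 ∧ ‖x‖ ^ 2 - I' x x = 0}},
      ∀ y ∈ {x : E | x ∉ {x : E | x ≠ 0 ∧ ‖x‖ ^ 2 - I' x x = 0} ∧
        ∃ s ∈ Set.Icc (0:ℝ) 1, s • x ∈ {x : E | x ≠ 0 ∧ ‖x‖ ^ 2 - I' x x = 0}},
      ¬ JoinedIn {x : E | x ≠ 0 ∧ ‖x‖ ^ 2 - I' x x = 0}ᶜ x y := by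
  have houter := isPathConnected_outerRegion_nehariSet hmono hI hzero hsup
    ((by norm_num : (1 : Cardinal) < 2).trans_le hdim)
  obtain ⟨d, hd, hpos⟩ := exists_forall_nehariGap_pos hmono hI hzero
  obtain ⟨y, -, s, -, hsy⟩ := houter.nonempty
  exact ⟨⟨s • y, hsy⟩, ⟨d, hd, fun x hx => not_lt.1 fun h => (hpos x hx.1 h).ne' hx.2⟩,
    innerRegion_union_outerRegion _, disjoint_innerRegion_outerRegion _,
    isPathConnected_innerRegion _ zero_notMem_nehariSet, houter,
    fun _ hx _ hy => not_joinedIn_innerRegion_outerRegion hmono hI hzero hx hy⟩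

/-- Topology of the Nehari set: under conditions (i)-(iv) of Theorem 2.1, the
Nehari set `𝒩 = {x ≠ 0 : ‖x‖² - I'(x)x = 0}` is nonempty, bounded away from the
origin, and its complement consists of exactly the two path-connected components
`Ω₁` (segment `[0,x]` misses `𝒩`) and `Ω₂` (segment `[0,x]` meets `𝒩`), with no
path in the complement joining them. -/
theorem stmt_13 (E : Type*) [NormedAddCommGroup E] [NormedSpace ℝ E] [Nontrivial E]
    (hdim : 2 ≤ Module.rank ℝ E)
    (hrefl : Function.Surjective (NormedSpace.inclusionInDoubleDual ℝ E))
    (I : E → ℝ) (I' : E → E →L[ℝ] ℝ) (hI : ∀ x, HasFDerivAt I (I' x) x)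
    (hwc : ∀ (x : ℕ → E) (x₀ : E),
      (∀ f : E →L[ℝ] ℝ, Tendsto (fun n => f (x n)) atTop (𝓝 (f x₀))) →
      Tendsto (fun n => I (x n)) atTop (𝓝 (I x₀)))
    (hzero : Tendsto (fun x => I x / ‖x‖ ^ 2) (𝓝[≠] (0 : E)) (𝓝 0))
    (hsup : ∀ K : Set E, K ⊆ {(0 : E)}ᶜ → IsCompact (toWeakSpace ℝ E '' K) →
      ∀ M : ℝ, ∃ s₀ : ℝ, ∀ s : ℝ, s₀ ≤ s → ∀ x ∈ K, M ≤ I (s • x) / s ^ 2)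
    (hmono : ∀ x : E, x ≠ 0 →
      MonotoneOn (fun s : ℝ => I' (s • x) x / s) (Set.Ioi 0)) :
    {x : E | x ≠ 0 ∧ ‖x‖ ^ 2 - I' x x = 0}.Nonempty ∧
    (∃ d > 0, ∀ x ∈ {x : E | x ≠ 0 ∧ ‖x‖ ^ 2 - I' x x = 0}, d ≤ ‖x‖) ∧
    ({x : E | x ∉ {x : E | x ≠ 0 ∧ ‖x‖ ^ 2 - I' x x = 0} ∧
        ∀ s ∈ Set.Icc (0:ℝ) 1, s • x ∉ {x : E | x ≠ 0 ∧ ‖x‖ ^ 2 - I' x x = 0}} ∪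
      {x : E | x ∉ {x : E | x ≠ 0 ∧ ‖x‖ ^ 2 - I' x x = 0} ∧
        ∃ s ∈ Set.Icc (0:ℝ) 1, s • x ∈ {x : E | x ≠ 0 ∧ ‖x‖ ^ 2 - I' x x = 0}}
      = {x : E | x ≠ 0 ∧ ‖x‖ ^ 2 - I' x x = 0}ᶜ) ∧
    Disjoint
      {x : E | x ∉ {x : E | x ≠ 0 ∧ ‖x‖ ^ 2 - I' x x = 0} ∧
        ∀ s ∈ Set.Icc (0:ℝ) 1, s • x ∉ {x : E | x ≠ 0 ∧ ‖x‖ ^ 2 - I' x x = 0}}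
      {x : E | x ∉ {x : E | x ≠ 0 ∧ ‖x‖ ^ 2 - I' x x = 0} ∧
        ∃ s ∈ Set.Icc (0:ℝ) 1, s • x ∈ {x : E | x ≠ 0 ∧ ‖x‖ ^ 2 - I' x x = 0}} ∧
    IsPathConnected
      {x : E | x ∉ {x : E | x ≠ 0 ∧ ‖x‖ ^ 2 - I' x x = 0} ∧
        ∀ s ∈ Set.Icc (0:ℝ) 1, s • x ∉ {x : E | x ≠ 0 ∧ ‖x‖ ^ 2 - I' x x = 0}} ∧
    IsPathConnected
      {x : E | x ∉ {x : E | x ≠ 0 ∧ ‖x‖ ^ 2 - I' x x = 0} ∧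
        ∃ s ∈ Set.Icc (0:ℝ) 1, s • x ∈ {x : E | x ≠ 0 ∧ ‖x‖ ^ 2 - I' x x = 0}} ∧
    ∀ x ∈ {x : E | x ∉ {x : E | x ≠ 0 ∧ ‖x‖ ^ 2 - I' x x = 0} ∧
        ∀ s ∈ Set.Icc (0:ℝ) 1, s • x ∉ {x : E | x ≠ 0 ∧ ‖x‖ ^ 2 - I' x x = 0}},
      ∀ y ∈ {x : E | x ∉ {x : E | x ≠ 0 ∧ ‖x‖ ^ 2 - I' x x = 0} ∧
        ∃ s ∈ Set.Icc (0:ℝ) 1, s • x ∈ {x : E | x ≠ 0 ∧ ‖x‖ ^ 2 - I' x x = 0}},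
      ¬ JoinedIn {x : E | x ≠ 0 ∧ ‖x‖ ^ 2 - I' x x = 0}ᶜ x y :=
  stmt_13_general E hdim I I' hI hzero hsup hmono
end

section
/- Let b : E → ℝ be C¹ on a normed space with b(0) = 0, b(u)/‖u‖² → +∞ as u → 0, b'(u)u ≥ b(u) > 0 for u ≠ 0, and for every u ≠ 0, s ↦ b'(su)u/s non-increasing on (0,∞). Then there exist positive constants α₀ and δ such that b(u) ≥ α₀‖u‖ for all ‖u‖ ≥ δ. -/
/-! The Euler-type inequality `b'(u)u ≥ b(u)` makes `t ↦ b(t u)/t` nondecreasing on `(0, ∞)`.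
Since `b(v)/‖v‖² → ∞` at `0`, some `δ > 0` has `b ≥ δ²` on the sphere of radius `δ`; pulling
`u` back to that sphere along its ray gives `b(u) ≥ (‖u‖/δ) δ² = δ‖u‖` whenever `‖u‖ ≥ δ`. -/

open Filter Topology Set

lemma monotoneOn_div_self_of_le_mul_deriv {f f' : ℝ → ℝ}
    (hf : ∀ t ∈ Ioi (0 : ℝ), HasDerivAt f (f' t) t) (hle : ∀ t ∈ Ioi (0 : ℝ), f t ≤ t * f' t) :
    MonotoneOn (fun t => f t / t) (Ioi 0) := by
  have hquot : ∀ t ∈ Ioi (0 : ℝ), HasDerivAt (fun t => f t / t) ((f' t * t - f t * 1) / t ^ 2) t :=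
    fun t ht => (hf t ht).div (hasDerivAt_id t) (ne_of_gt ht)
  refine monotoneOn_of_hasDerivWithinAt_nonneg (convex_Ioi 0)
    (fun t ht => (hquot t ht).continuousAt.continuousWithinAt)
    (fun t ht => (hquot t (interior_subset ht)).hasDerivWithinAt) fun t ht => ?_
  rw [interior_Ioi] at ht
  have := hle t ht
  exact div_nonneg (by linarith) (sq_nonneg t)

section Ray

variable {E : Type*} [NormedAddCommGroup E] [NormedSpace ℝ E]
  {b : E → ℝ} {b' : E → E →L[ℝ] ℝ}

lemma monotoneOn_div_self_comp_smul (hb : ∀ u, HasFDerivAt b (b' u) u)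
    (hle : ∀ u : E, u ≠ 0 → b u ≤ b' u u) (u : E) (hu : u ≠ 0) :
    MonotoneOn (fun t : ℝ => b (t • u) / t) (Ioi 0) := by
  refine monotoneOn_div_self_of_le_mul_deriv (f' := fun t => b' (t • u) u)
    (fun t _ => (hb (t • u)).comp_hasDerivAt t (by simpa using (hasDerivAt_id t).smul_const u))
    fun t ht => ?_
  simpa [map_smul] using hle (t • u) (smul_ne_zero (ne_of_gt ht) hu)

lemma div_le_of_smul_of_le_one (hb : ∀ u, HasFDerivAt b (b' u) u)
    (hle : ∀ u : E, u ≠ 0 → b u ≤ b' u u) {u : E} (hu : u ≠ 0) {c : ℝ} (hc : 0 < c)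
    (hc1 : c ≤ 1) : b (c • u) / c ≤ b u := by
  simpa using monotoneOn_div_self_comp_smul hb hle u hu (mem_Ioi.2 hc) (mem_Ioi.2 one_pos) hc1

end Ray

lemma exists_pos_forall_norm_eq_sq_le {E : Type*} [NormedAddCommGroup E] {b : E → ℝ}
    (hblow : Tendsto (fun u => b u / ‖u‖ ^ 2) (𝓝[≠] 0) atTop) :
    ∃ δ > 0, ∀ v : E, ‖v‖ = δ → δ ^ 2 ≤ b v := by
  obtain ⟨ε, hε, hball⟩ := Metric.eventually_nhds_iff.1 <|
    eventually_nhdsWithin_iff.1 (hblow.eventually (eventually_ge_atTop 1))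
  refine ⟨ε / 2, by positivity, fun v hv => ?_⟩
  have hv0 : v ≠ 0 := by rintro rfl; simp at hv; linarith
  have h := hball (by rw [dist_zero_right, hv]; linarith) hv0
  rw [hv, one_le_div (by positivity)] at h
  exact h

theorem stmt_15_general (E : Type*) [NormedAddCommGroup E] [NormedSpace ℝ E]
    (b : E → ℝ) (b' : E → E →L[ℝ] ℝ) (hb : ∀ u, HasFDerivAt b (b' u) u)
    (hblow : Tendsto (fun u => b u / ‖u‖ ^ 2) (𝓝[≠] (0 : E)) atTop)
    (hpos : ∀ u : E, u ≠ 0 → 0 < b u ∧ b u ≤ b' u u) :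
    ∃ α₀ > 0, ∃ δ > 0, ∀ u : E, δ ≤ ‖u‖ → α₀ * ‖u‖ ≤ b u := by
  obtain ⟨δ, hδ, hsphere⟩ := exists_pos_forall_norm_eq_sq_le hblow
  refine ⟨δ, hδ, δ, hδ, fun u hu => ?_⟩
  have hnorm : 0 < ‖u‖ := hδ.trans_le hu
  have hu0 : u ≠ 0 := norm_pos_iff.1 hnorm
  set c := δ / ‖u‖ with hc_def
  have hc : 0 < c := by positivity
  have hcu : ‖c • u‖ = δ := by
    rw [norm_smul, Real.norm_of_nonneg hc.le, hc_def, div_mul_cancel₀ _ hnorm.ne']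
  calc δ * ‖u‖ = δ ^ 2 / c := by rw [hc_def]; field_simp
    _ ≤ b (c • u) / c := by gcongr; exact hsphere _ hcu
    _ ≤ b u := div_le_of_smul_of_le_one hb (fun v hv => (hpos v hv).2) hu0 hc
        ((div_le_one hnorm).2 hu)

/-- Conditions (ii) and (iii) of Theorem 2.2 imply an eventual linear lower bound:
there are `α₀, δ > 0` with `b(u) ≥ α₀‖u‖` for all `‖u‖ ≥ δ`. -/
theorem stmt_15 (E : Type*) [NormedAddCommGroup E] [NormedSpace ℝ E]
    (b : E → ℝ) (b' : E → E →L[ℝ] ℝ) (hb : ∀ u, HasFDerivAt b (b' u) u)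
    (hb0 : b 0 = 0)
    (hblow : Tendsto (fun u => b u / ‖u‖ ^ 2) (𝓝[≠] (0 : E)) atTop)
    (hpos : ∀ u : E, u ≠ 0 → 0 < b u ∧ b u ≤ b' u u)
    (hanti : ∀ u : E, u ≠ 0 →
      AntitoneOn (fun s : ℝ => b' (s • u) u / s) (Set.Ioi 0)) :
    ∃ α₀ > 0, ∃ δ > 0, ∀ u : E, δ ≤ ‖u‖ → α₀ * ‖u‖ ≤ b u :=
  stmt_15_general E b b' hb hblow hpos
end

section
/- Splitting estimate: let 1 < α < 2, T > 0, G : ℝ^{2n} → ℝ with G(y) ≥ M|y|² for |y| ≤ δ and G(y) ≥ d|y|^α for |y| ≥ δ (M, d, δ > 0). Then for u ∈ L^α([0,T]; ℝ^{2n}), writing u = v + w with v = u·1_{|u|≤δ} and w = u·1_{|u|>δ}, one has ∫₀ᵀ G(u) dt ≥ M T^{-(2-α)/α} ‖v‖_α² + d ‖w‖_α^α. -/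
open MeasureTheory

/-- Splitting estimate: if `G(y) ≥ M|y|²` for `|y| ≤ δ` and `G(y) ≥ d|y|^α` for
`|y| ≥ δ`, then for `u ∈ L^α([0,T])` split as `u = v + w` by the threshold `δ`,
`∫₀ᵀ G(u) ≥ M T^{-(2-α)/α} ‖v‖_α² + d ‖w‖_α^α`. -/
theorem stmt_16 (n : ℕ) (T α M d δ : ℝ) (hT : 0 < T) (hα : 1 < α) (hα2 : α < 2)
    (hM : 0 < M) (hd : 0 < d) (hδ : 0 < δ)
    (G : EuclideanSpace ℝ (Fin (2*n)) → ℝ) (hGmeas : Measurable G)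
    (hG1 : ∀ y : EuclideanSpace ℝ (Fin (2*n)), ‖y‖ ≤ δ → M * ‖y‖ ^ 2 ≤ G y)
    (hG2 : ∀ y : EuclideanSpace ℝ (Fin (2*n)), δ ≤ ‖y‖ → d * ‖y‖ ^ α ≤ G y)
    (u v w : ℝ → EuclideanSpace ℝ (Fin (2*n)))
    (hu : MemLp u (ENNReal.ofReal α) (volume.restrict (Set.Ioc 0 T)))
    (hint : Integrable (fun t => G (u t)) (volume.restrict (Set.Ioc 0 T)))
    (hv : ∀ t, v t = if ‖u t‖ ≤ δ then u t else 0)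
    (hw : ∀ t, w t = if δ < ‖u t‖ then u t else 0) :
    M * T ^ (-(2 - α) / α) * ((∫ t in Set.Ioc 0 T, ‖v t‖ ^ α) ^ (1/α)) ^ 2
        + d * (∫ t in Set.Ioc 0 T, ‖w t‖ ^ α)
      ≤ ∫ t in Set.Ioc 0 T, G (u t) := by
  set μ := volume.restrict (Set.Ioc 0 T) with hμ
  have hα0 : (0:ℝ) < α := by linarith
  haveI : IsFiniteMeasure μ := by
    constructor
    rw [hμ, Measure.restrict_apply_univ, Real.volume_Ioc]
    exact ENNReal.ofReal_lt_top
  -- measurability of v and w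
  obtain ⟨u', hu'sm, huu'⟩ := hu.1
  have hsetmeas : MeasurableSet {t : ℝ | ‖u' t‖ ≤ δ} :=
    measurableSet_le hu'sm.measurable.norm measurable_const
  have hvmeas : AEStronglyMeasurable v μ := by
    refine ⟨fun t => if ‖u' t‖ ≤ δ then u' t else 0, ?_, ?_⟩
    · exact StronglyMeasurable.ite hsetmeas hu'sm stronglyMeasurable_const
    · filter_upwards [huu'] with t ht
      rw [hv t, ht]
  have hwmeas : AEStronglyMeasurable w μ := by
    refine ⟨fun t => if δ < ‖u' t‖ then u' t else 0, ?_, ?_⟩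
    · exact StronglyMeasurable.ite
        (measurableSet_lt measurable_const hu'sm.measurable.norm) hu'sm
        stronglyMeasurable_const
    · filter_upwards [huu'] with t ht
      rw [hw t, ht]
  have hvbound : ∀ t, ‖v t‖ ≤ δ := by
    intro t
    rw [hv t]
    split
    · assumption
    · simpa using hδ.le
  have hwbound : ∀ t, ‖w t‖ ≤ ‖u t‖ := by
    intro t
    rw [hw t]
    split
    · exact le_refl _
    · simp
  -- integrability of the two pieces
  have hvint2 : Integrable (fun t => ‖v t‖ ^ (2:ℕ)) μ := by
    refine (integrable_const (δ ^ (2:ℕ))).mono'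
      ((hvmeas.aemeasurable.norm.pow_const 2).aestronglyMeasurable) ?_
    filter_upwards with t
    rw [Real.norm_of_nonneg (by positivity)]
    exact pow_le_pow_left₀ (norm_nonneg _) (hvbound t) 2
  have huint : Integrable (fun t => ‖u t‖ ^ α) μ := by
    have := hu.integrable_norm_rpow (by simp [hα0]) ENNReal.ofReal_ne_top
    rwa [ENNReal.toReal_ofReal hα0.le] at this
  have hwint : Integrable (fun t => ‖w t‖ ^ α) μ := by
    refine huint.mono'
      (((Real.continuous_rpow_const hα0.le).measurable.comp_aemeasurable
        hwmeas.aemeasurable.norm).aestronglyMeasurable) ?_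
    filter_upwards with t
    rw [Real.norm_of_nonneg (Real.rpow_nonneg (norm_nonneg _) _)]
    exact Real.rpow_le_rpow (norm_nonneg _) (hwbound t) hα0.le
  -- pointwise bound
  have hpt : ∀ t, M * ‖v t‖ ^ (2:ℕ) + d * ‖w t‖ ^ α ≤ G (u t) := by
    intro t
    by_cases h : ‖u t‖ ≤ δ
    · have hv' : v t = u t := by rw [hv t, if_pos h]
      have hw' : w t = 0 := by rw [hw t, if_neg (not_lt.mpr h)]
      rw [hv', hw']
      have : d * ‖(0 : EuclideanSpace ℝ (Fin (2*n)))‖ ^ α = 0 := by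
        rw [norm_zero, Real.zero_rpow hα0.ne']; ring
      rw [this, add_zero]
      exact hG1 _ h
    · push_neg at h
      have hv' : v t = 0 := by rw [hv t, if_neg (not_le.mpr h)]
      have hw' : w t = u t := by rw [hw t, if_pos h]
      rw [hv', hw', norm_zero]
      simpa using hG2 _ h.le
  -- main integral bound
  have hmain : M * (∫ t, ‖v t‖ ^ (2:ℕ) ∂μ) + d * (∫ t, ‖w t‖ ^ α ∂μ)
      ≤ ∫ t, G (u t) ∂μ := by
    have := integral_mono ((hvint2.const_mul M).add (hwint.const_mul d)) hint
      (fun t => hpt t)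
    simp only [Pi.add_apply] at this
    rwa [integral_add (hvint2.const_mul M) (hwint.const_mul d),
      integral_const_mul, integral_const_mul] at this
  -- Hölder step
  set X := ∫ t in Set.Ioc 0 T, ‖v t‖ ^ α with hX
  set I := ∫ t, ‖v t‖ ^ (2:ℕ) ∂μ with hI
  have hXnonneg : 0 ≤ X :=
    integral_nonneg fun t => Real.rpow_nonneg (norm_nonneg _) _
  have hInonneg : 0 ≤ I := integral_nonneg fun t => by positivity
  have hconj : Real.HolderConjugate (2/α) (2/(2-α)) := by
    rw [Real.holderConjugate_iff]
    constructor
    · rw [lt_div_iff₀ hα0]; linarith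
    · rw [inv_div, inv_div]; field_simp; ring
  have hmemf : MemLp (fun t => ‖v t‖ ^ α) (ENNReal.ofReal (2/α)) μ := by
    refine MemLp.of_bound (((Real.continuous_rpow_const hα0.le).measurable.comp_aemeasurable
        hvmeas.aemeasurable.norm).aestronglyMeasurable) (δ ^ α) ?_
    filter_upwards with t
    rw [Real.norm_of_nonneg (Real.rpow_nonneg (norm_nonneg _) _)]
    exact Real.rpow_le_rpow (norm_nonneg _) (hvbound t) hα0.le
  have hholder :=
    integral_mul_le_Lp_mul_Lq_of_nonneg hconj
      (Filter.Eventually.of_forall fun t => Real.rpow_nonneg (norm_nonneg _) _)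
      (Filter.Eventually.of_forall fun _ => zero_le_one)
      hmemf (memLp_const (1:ℝ))
  simp only [mul_one, Real.one_rpow] at hholder
  have hpow_eq : ∀ t, (‖v t‖ ^ α) ^ (2/α) = ‖v t‖ ^ (2:ℕ) := by
    intro t
    rw [← Real.rpow_natCast (‖v t‖) 2, ← Real.rpow_mul (norm_nonneg _)]
    congr 1
    push_cast
    field_simp
  have hconst : (∫ _t, (1:ℝ) ∂μ) = T := by
    simp [hμ, Real.volume_Ioc, ENNReal.toReal_ofReal hT.le, hT.le]
  rw [integral_congr_ae (Filter.Eventually.of_forall hpow_eq), hconst] at hholder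
  -- hholder : X ≤ I ^ (1/(2/α)) * T ^ (1/(2/(2-α)))
  have h1 : (1:ℝ)/(2/α) = α/2 := by field_simp
  have h2 : (1:ℝ)/(2/(2-α)) = (2-α)/2 := by
    rw [one_div, inv_div]
  rw [h1, h2] at hholder
  -- raise to power 2/α
  have hraise : X ^ ((2:ℝ)/α) ≤ I * T ^ ((2-α)/α) := by
    calc X ^ ((2:ℝ)/α) ≤ (I ^ (α/2) * T ^ ((2-α)/2)) ^ ((2:ℝ)/α) := by
          apply Real.rpow_le_rpow hXnonneg hholder (by positivity)
      _ = I * T ^ ((2-α)/α) := by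
          rw [Real.mul_rpow (Real.rpow_nonneg hInonneg _) (Real.rpow_nonneg hT.le _),
            ← Real.rpow_mul hInonneg, ← Real.rpow_mul hT.le]
          rw [show α/2 * (2/α) = 1 by field_simp, show (2-α)/2 * (2/α) = (2-α)/α by
            field_simp, Real.rpow_one]
  have hsq : (X ^ (1/α)) ^ (2:ℕ) = X ^ ((2:ℝ)/α) := by
    rw [← Real.rpow_natCast (X ^ (1/α)) 2, ← Real.rpow_mul hXnonneg]
    congr 1
    push_cast
    ring
  have hvpart : M * T ^ (-(2 - α) / α) * (X ^ (1/α)) ^ (2:ℕ) ≤ M * I := by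
    rw [hsq]
    have hTpos : (0:ℝ) < T ^ (-(2 - α) / α) := Real.rpow_pos_of_pos hT _
    have : T ^ (-(2 - α) / α) * X ^ ((2:ℝ)/α)
        ≤ T ^ (-(2 - α) / α) * (I * T ^ ((2-α)/α)) :=
      mul_le_mul_of_nonneg_left hraise hTpos.le
    calc M * T ^ (-(2 - α) / α) * X ^ ((2:ℝ)/α)
        = M * (T ^ (-(2 - α) / α) * X ^ ((2:ℝ)/α)) := by ring
      _ ≤ M * (T ^ (-(2 - α) / α) * (I * T ^ ((2-α)/α))) :=
          mul_le_mul_of_nonneg_left this hM.le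
      _ = M * (I * (T ^ (-(2 - α) / α) * T ^ ((2-α)/α))) := by ring
      _ = M * I := by
          rw [← Real.rpow_add hT, neg_div, neg_add_cancel, Real.rpow_zero, mul_one]
  linarith [hmain, hvpart]
end

section
/- Let G : ℝ^{2n} → ℝ be continuous with G(y)/|y|² → +∞ as y → 0, G(y) > 0 for y ≠ 0, and G(y) ≥ b₁|y|^α for |y| ≥ R (with 1 < α < 2, b₁, R > 0). Then the functional b(u) = ∫₀ᵀ G(u) dt on L^α([0,T]; ℝ^{2n}) satisfies b(u)/‖u‖_α² → +∞ as ‖u‖_α → 0. -/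
open MeasureTheory Filter Topology

/-- If `G(y)/|y|² → +∞` as `y → 0`, `G > 0` away from `0`, and `G(y) ≥ b₁|y|^α`
for `|y| ≥ R`, then `b(u) = ∫₀ᵀ G(u)` satisfies `b(u)/‖u‖_α² → +∞` as `‖u‖_α → 0`. -/
theorem stmt_17 (n : ℕ) (T α b₁ R : ℝ) (hT : 0 < T) (hα : 1 < α) (hα2 : α < 2)
    (hb₁ : 0 < b₁) (hR : 0 < R)
    (G : EuclideanSpace ℝ (Fin (2*n)) → ℝ) (hGc : Continuous G)
    (hblow : Tendsto (fun y => G y / ‖y‖ ^ 2)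
      (𝓝[≠] (0 : EuclideanSpace ℝ (Fin (2*n)))) atTop)
    (hGpos : ∀ y : EuclideanSpace ℝ (Fin (2*n)), y ≠ 0 → 0 < G y)
    (hG2 : ∀ y : EuclideanSpace ℝ (Fin (2*n)), R ≤ ‖y‖ → b₁ * ‖y‖ ^ α ≤ G y) :
    ∀ M : ℝ, ∃ r > 0, ∀ u : ℝ → EuclideanSpace ℝ (Fin (2*n)),
      MemLp u (ENNReal.ofReal α) (volume.restrict (Set.Ioc 0 T)) →
      Integrable (fun t => G (u t)) (volume.restrict (Set.Ioc 0 T)) →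
      0 < (∫ t in Set.Ioc 0 T, ‖u t‖ ^ α) ^ (1/α) →
      (∫ t in Set.Ioc 0 T, ‖u t‖ ^ α) ^ (1/α) ≤ r →
      M * (((∫ t in Set.Ioc 0 T, ‖u t‖ ^ α) ^ (1/α)) ^ 2)
        ≤ ∫ t in Set.Ioc 0 T, G (u t) := by
  intro M
  have hα0 : (0:ℝ) < α := by linarith
  by_cases hn : n = 0
  · -- trivial case: the space is a point
    refine ⟨1, one_pos, fun u hu hint hpos hle => absurd hpos ?_⟩
    subst hn
    haveI : IsEmpty (Fin (2*0)) := by rw [Nat.mul_zero]; infer_instance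
    haveI : Subsingleton (EuclideanSpace ℝ (Fin (2*0))) :=
      @Equiv.subsingleton _ _ (WithLp.equiv 2 (Fin (2*0) → ℝ)) (Pi.uniqueOfIsEmpty (fun _ : Fin (2*0) => ℝ)).instSubsingleton
    have h0 : ∀ t, ‖u t‖ ^ α = (0:ℝ) := fun t => by
      rw [Subsingleton.elim (u t) 0, norm_zero, Real.zero_rpow hα0.ne']
    simp only [h0, integral_zero]
    rw [Real.zero_rpow (by positivity : (1/α) ≠ 0)]
    exact lt_irrefl 0
  -- main case
  haveI : Nonempty (Fin (2*n)) := ⟨⟨0, by omega⟩⟩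
  haveI : Nontrivial (EuclideanSpace ℝ (Fin (2*n))) := by infer_instance
  haveI : Filter.NeBot (𝓝[≠] (0 : EuclideanSpace ℝ (Fin (2*n)))) :=
    Module.punctured_nhds_neBot ℝ _ _
  -- nonnegativity of G
  have hG0 : (0:ℝ) ≤ G 0 := by
    have h1 : Tendsto G (𝓝[≠] (0:EuclideanSpace ℝ (Fin (2*n)))) (𝓝 (G 0)) :=
      (hGc.tendsto 0).mono_left nhdsWithin_le_nhds
    exact ge_of_tendsto h1 (eventually_mem_nhdsWithin.mono fun y hy => (hGpos y hy).le)
  have hGnonneg : ∀ y : EuclideanSpace ℝ (Fin (2*n)), 0 ≤ G y := by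
    intro y
    rcases eq_or_ne y 0 with h | h
    · rw [h]; exact hG0
    · exact (hGpos y h).le
  set M' : ℝ := max M 1 with hM'def
  have hM' : (0:ℝ) < M' := lt_of_lt_of_le one_pos (le_max_right _ _)
  set cT : ℝ := T ^ ((2-α)/α) with hcTdef
  have hcT : 0 < cT := Real.rpow_pos_of_pos hT _
  have h2α : (0:ℝ) < (2:ℝ) ^ ((2:ℝ)/α) := by positivity
  set C : ℝ := M' * cT * (2:ℝ) ^ ((2:ℝ)/α) with hCdef
  have hC : 0 < C := by positivity
  -- small-ball bound from hblow
  obtain ⟨δ, hδpos, hδ⟩ : ∃ δ > 0, ∀ y : EuclideanSpace ℝ (Fin (2*n)), y ≠ 0 → ‖y‖ < δ → C ≤ G y / ‖y‖ ^ 2 := by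
    have h := hblow.eventually_ge_atTop C
    rw [eventually_nhdsWithin_iff, Metric.eventually_nhds_iff] at h
    obtain ⟨ε, hε, hh⟩ := h
    exact ⟨ε, hε, fun y hy hylt => hh (by simpa [dist_eq_norm] using hylt) hy⟩
  set δ' : ℝ := min (δ/2) R with hδ'def
  have hδ'pos : 0 < δ' := lt_min (by linarith) hR
  have hδ'R : δ' ≤ R := min_le_right _ _
  have hsmall : ∀ y : EuclideanSpace ℝ (Fin (2*n)), ‖y‖ ≤ δ' → C * ‖y‖ ^ 2 ≤ G y := by
    intro y hy
    rcases eq_or_ne y 0 with h | h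
    · rw [h, norm_zero]; simpa using hG0
    · have hylt : ‖y‖ < δ := lt_of_le_of_lt hy (lt_of_le_of_lt (min_le_left _ _) (by linarith))
      have := hδ y h hylt
      have hn2 : (0:ℝ) < ‖y‖ ^ 2 := pow_pos (norm_pos_iff.mpr h) 2
      calc C * ‖y‖ ^ 2 ≤ (G y / ‖y‖ ^ 2) * ‖y‖ ^ 2 := by
            exact mul_le_mul_of_nonneg_right this hn2.le
        _ = G y := div_mul_cancel₀ _ hn2.ne'
  -- lower bound on the annulus and beyond
  obtain ⟨y₀, hy₀⟩ : ∃ y : EuclideanSpace ℝ (Fin (2*n)), ‖y‖ = R := by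
    obtain ⟨x, hx⟩ := exists_ne (0:EuclideanSpace ℝ (Fin (2*n)))
    refine ⟨(R/‖x‖) • x, ?_⟩
    rw [norm_smul, Real.norm_eq_abs, abs_of_nonneg (div_nonneg hR.le (norm_nonneg x)), div_mul_cancel₀]
    exact norm_ne_zero_iff.mpr hx
  have hKcomp : IsCompact (Metric.closedBall (0:EuclideanSpace ℝ (Fin (2*n))) R ∩ {y | δ' ≤ ‖y‖}) := by
    refine (isCompact_closedBall (0:EuclideanSpace ℝ (Fin (2*n))) R).inter_right ?_
    have : {y : EuclideanSpace ℝ (Fin (2*n)) | δ' ≤ ‖y‖} = (fun y : EuclideanSpace ℝ (Fin (2*n)) => ‖y‖) ⁻¹' (Set.Ici δ') := rfl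
    rw [this]
    exact isClosed_Ici.preimage continuous_norm
  have hKne : (Metric.closedBall (0:EuclideanSpace ℝ (Fin (2*n))) R ∩ {y | δ' ≤ ‖y‖}).Nonempty :=
    ⟨y₀, by simp [Metric.mem_closedBall, dist_eq_norm, hy₀, hδ'R]⟩
  obtain ⟨y₁, hy₁K, hy₁min⟩ := hKcomp.exists_isMinOn hKne hGc.continuousOn
  have hy₁ne : y₁ ≠ 0 := by
    intro h
    have h2 := hy₁K.2
    rw [h] at h2
    simp only [Set.mem_setOf_eq, norm_zero] at h2
    linarith
  have hm : 0 < G y₁ := hGpos y₁ hy₁ne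
  have hRα : (0:ℝ) < R ^ α := Real.rpow_pos_of_pos hR _
  set c : ℝ := min b₁ (G y₁ / R ^ α) with hcdef
  have hc : 0 < c := lt_min hb₁ (by positivity)
  have hlarge : ∀ y : EuclideanSpace ℝ (Fin (2*n)), δ' ≤ ‖y‖ → c * ‖y‖ ^ α ≤ G y := by
    intro y hy
    rcases le_total ‖y‖ R with h | h
    · have h1 : ‖y‖ ^ α ≤ R ^ α := Real.rpow_le_rpow (norm_nonneg _) h hα0.le
      calc c * ‖y‖ ^ α ≤ (G y₁ / R ^ α) * R ^ α := by
            apply mul_le_mul (min_le_right _ _) h1 (by positivity) (by positivity)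
        _ = G y₁ := div_mul_cancel₀ _ hRα.ne'
        _ ≤ G y := hy₁min ⟨by simpa [Metric.mem_closedBall, dist_eq_norm] using h, hy⟩
    · calc c * ‖y‖ ^ α ≤ b₁ * ‖y‖ ^ α := by
            apply mul_le_mul_of_nonneg_right (min_le_left _ _)
            positivity
        _ ≤ G y := hG2 y h
  -- choice of r
  set r : ℝ := (c / (M' * (2:ℝ) ^ ((2:ℝ)/α))) ^ (1/(2-α)) with hrdef
  have hr : 0 < r := Real.rpow_pos_of_pos (by positivity) _
  have hrkey : M' * (2:ℝ) ^ ((2:ℝ)/α) * r ^ (2-α) = c := by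
    have hx : (0:ℝ) ≤ c / (M' * (2:ℝ) ^ ((2:ℝ)/α)) := by positivity
    rw [hrdef, ← Real.rpow_mul hx, one_div_mul_cancel (by linarith : (2:ℝ)-α ≠ 0),
      Real.rpow_one, mul_div_cancel₀]
    positivity
  refine ⟨r, hr, fun u hu hint hpos hle => ?_⟩
  obtain ⟨v, hvmeas, huv⟩ : ∃ v : ℝ → EuclideanSpace ℝ (Fin (2*n)),
      StronglyMeasurable v ∧ u =ᵐ[volume.restrict (Set.Ioc 0 T)] v :=
    ⟨hu.1.mk u, hu.1.stronglyMeasurable_mk, hu.1.ae_eq_mk⟩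
  have hIeq : ∫ t in Set.Ioc 0 T, ‖u t‖ ^ α = ∫ t in Set.Ioc 0 T, ‖v t‖ ^ α :=
    integral_congr_ae (huv.mono fun t ht => by simp only [ht])
  have hGeq : ∫ t in Set.Ioc 0 T, G (u t) = ∫ t in Set.Ioc 0 T, G (v t) :=
    integral_congr_ae (huv.mono fun t ht => by simp only [ht])
  have hv : MemLp v (ENNReal.ofReal α) (volume.restrict (Set.Ioc 0 T)) := hu.ae_eq huv
  have hintv : Integrable (fun t => G (v t)) (volume.restrict (Set.Ioc 0 T)) :=
    hint.congr (huv.mono fun t ht => by simp only [ht])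
  rw [hIeq] at hpos hle ⊢
  rw [hGeq]
  set I : ℝ := ∫ t in Set.Ioc 0 T, ‖v t‖ ^ α with hIdef
  have hInn : 0 ≤ I := integral_nonneg fun t => Real.rpow_nonneg (norm_nonneg _) _
  have hIpos : 0 < I := by
    rcases hInn.lt_or_eq with h | h
    · exact h
    · rw [← h, Real.zero_rpow (by positivity : (1/α) ≠ 0)] at hpos
      exact absurd hpos (lt_irrefl 0)
  have hIr : I ≤ r ^ α := by
    have h1 := Real.rpow_le_rpow (Real.rpow_nonneg hInn _) hle hα0.le
    rwa [← Real.rpow_mul hInn, one_div_mul_cancel hα0.ne', Real.rpow_one] at h1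
  have hpow : ((I ^ (1/α)) ^ (2:ℕ) : ℝ) = I ^ ((2:ℝ)/α) := by
    rw [← Real.rpow_natCast (I ^ (1/α)) 2, ← Real.rpow_mul hInn]
    congr 1
    push_cast
    ring
  rw [hpow]
  have hMM' : M * I ^ ((2:ℝ)/α) ≤ M' * I ^ ((2:ℝ)/α) :=
    mul_le_mul_of_nonneg_right (le_max_left _ _) (Real.rpow_nonneg hInn _)
  refine le_trans hMM' ?_
  -- split the domain
  set A : Set ℝ := {t | ‖v t‖ ≤ δ'} with hAdef
  have hAmeas : MeasurableSet A := measurableSet_le hvmeas.measurable.norm measurable_const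
  set S : Set ℝ := Set.Ioc 0 T ∩ A with hSdef
  set S' : Set ℝ := Set.Ioc 0 T \ A with hS'def
  have hSmeas : MeasurableSet S := measurableSet_Ioc.inter hAmeas
  have hS'meas : MeasurableSet S' := measurableSet_Ioc.diff hAmeas
  have hIntnorm : IntegrableOn (fun t => ‖v t‖ ^ α) (Set.Ioc 0 T) volume := by
    have h1 := hv.integrable_norm_rpow (by simp [hα0] : ENNReal.ofReal α ≠ 0)
      ENNReal.ofReal_ne_top
    rwa [ENNReal.toReal_ofReal hα0.le] at h1
  have hIntG : IntegrableOn (fun t => G (v t)) (Set.Ioc 0 T) volume := hintv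
  have hIntnormS : IntegrableOn (fun t => ‖v t‖ ^ α) S volume :=
    hIntnorm.mono_set Set.inter_subset_left
  have hIntnormS' : IntegrableOn (fun t => ‖v t‖ ^ α) S' volume :=
    hIntnorm.mono_set Set.diff_subset
  have hIntGS : IntegrableOn (fun t => G (v t)) S volume :=
    hIntG.mono_set Set.inter_subset_left
  have hIntGS' : IntegrableOn (fun t => G (v t)) S' volume :=
    hIntG.mono_set Set.diff_subset
  set IA : ℝ := ∫ t in S, ‖v t‖ ^ α with hIAdef
  set IB : ℝ := ∫ t in S', ‖v t‖ ^ α with hIBdef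
  have hIA0 : 0 ≤ IA := integral_nonneg fun t => Real.rpow_nonneg (norm_nonneg _) _
  have hIB0 : 0 ≤ IB := integral_nonneg fun t => Real.rpow_nonneg (norm_nonneg _) _
  have hGA0 : 0 ≤ ∫ t in S, G (v t) := setIntegral_nonneg hSmeas fun t _ => hGnonneg _
  have hGB0 : 0 ≤ ∫ t in S', G (v t) := setIntegral_nonneg hS'meas fun t _ => hGnonneg _
  have hsplitN : IA + IB = I := integral_inter_add_diff hAmeas hIntnorm
  have hsplitG : (∫ t in S, G (v t)) + ∫ t in S', G (v t) = ∫ t in Set.Ioc 0 T, G (v t) :=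
    integral_inter_add_diff hAmeas hIntG
  -- finite measure on S
  have hSfin : volume S < ⊤ :=
    lt_of_le_of_lt (measure_mono Set.inter_subset_left) measure_Ioc_lt_top
  haveI : IsFiniteMeasure (volume.restrict S) :=
    ⟨by rwa [Measure.restrict_apply_univ]⟩
  -- the quadratic integral on S
  set J : ℝ := ∫ t in S, ‖v t‖ ^ (2:ℕ) with hJdef
  have hJ0 : 0 ≤ J := integral_nonneg fun t => by positivity
  have hIntsqS : IntegrableOn (fun t => ‖v t‖ ^ (2:ℕ)) S volume := by
    refine Integrable.mono' (integrable_const (δ' ^ 2))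
      ((hvmeas.measurable.norm.pow_const 2).aestronglyMeasurable) ?_
    filter_upwards [ae_restrict_mem hSmeas] with t ht
    rw [Real.norm_of_nonneg (by positivity)]
    exact pow_le_pow_left₀ (norm_nonneg _) ht.2 2
  have hGA : C * J ≤ ∫ t in S, G (v t) := by
    rw [hJdef, ← integral_const_mul]
    exact setIntegral_mono_on (hIntsqS.const_mul C) hIntGS hSmeas fun t ht => hsmall _ ht.2
  have hGB : c * IB ≤ ∫ t in S', G (v t) := by
    rw [hIBdef, ← integral_const_mul]
    exact setIntegral_mono_on (hIntnormS'.const_mul c) hIntGS' hS'meas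
      fun t ht => hlarge _ (not_le.mp ht.2).le
  -- Hölder on S
  have hpq : Real.HolderConjugate (2/α) (2/(2-α)) := by
    constructor
    · rw [inv_div, inv_div, inv_one]
      ring
    · exact div_pos two_pos hα0
    · exact div_pos two_pos (by linarith)
  have hfS : MemLp (fun t => ‖v t‖ ^ α) (ENNReal.ofReal (2/α)) (volume.restrict S) := by
    refine MemLp.of_bound (((Real.continuous_rpow_const hα0.le).measurable.comp hvmeas.measurable.norm).aestronglyMeasurable)
      (δ' ^ α) ?_
    filter_upwards [ae_restrict_mem hSmeas] with t ht
    rw [Real.norm_of_nonneg (Real.rpow_nonneg (norm_nonneg _) _)]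
    exact Real.rpow_le_rpow (norm_nonneg _) ht.2 hα0.le
  have hgS : MemLp (fun _ : ℝ => (1:ℝ)) (ENNReal.ofReal (2/(2-α))) (volume.restrict S) :=
    memLp_const 1
  have hH := integral_mul_le_Lp_mul_Lq_of_nonneg hpq
    (Eventually.of_forall fun t => Real.rpow_nonneg (norm_nonneg (v t)) α)
    (Eventually.of_forall fun _ => zero_le_one) hfS hgS
  simp only [mul_one, Real.one_rpow] at hH
  rw [one_div_div, one_div_div] at hH
  have e2 : ∀ t : ℝ, (‖v t‖ ^ α) ^ ((2:ℝ)/α) = ‖v t‖ ^ (2:ℕ) := by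
    intro t
    rw [← Real.rpow_mul (norm_nonneg _), mul_div_cancel₀ _ hα0.ne',
      show ((2:ℝ)) = ((2:ℕ):ℝ) by norm_num, Real.rpow_natCast]
  have e3 : ∫ t in S, (1:ℝ) = (volume S).toReal := by
    simp [Measure.restrict_apply_univ, Measure.real]
  simp only [e2] at hH
  rw [e3] at hH
  have hμS : (volume S).toReal ≤ T := by
    refine ENNReal.toReal_le_of_le_ofReal hT.le ?_
    refine le_trans (measure_mono Set.inter_subset_left) ?_
    rw [Real.volume_Ioc, sub_zero]
  have hIA_le : IA ≤ J ^ (α/2) * T ^ ((2-α)/2) := by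
    refine le_trans hH ?_
    apply mul_le_mul_of_nonneg_left _ (Real.rpow_nonneg hJ0 _)
    exact Real.rpow_le_rpow ENNReal.toReal_nonneg hμS (by linarith)
  have hIA2 : IA ^ ((2:ℝ)/α) ≤ J * cT := by
    have h1 := Real.rpow_le_rpow hIA0 hIA_le (by positivity : (0:ℝ) ≤ 2/α)
    rwa [Real.mul_rpow (Real.rpow_nonneg hJ0 _) (Real.rpow_nonneg hT.le _),
      ← Real.rpow_mul hJ0, ← Real.rpow_mul hT.le,
      show α/2*(2/α) = 1 by field_simp,
      show (2-α)/2*(2/α) = (2-α)/α by field_simp,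
      Real.rpow_one, ← hcTdef] at h1
  -- case analysis
  rcases le_or_gt (I/2) IA with hcase | hcase
  · -- the small part dominates
    have hI2 : I ≤ 2 * IA := by linarith
    have h1 : I ^ ((2:ℝ)/α) ≤ (2*IA) ^ ((2:ℝ)/α) :=
      Real.rpow_le_rpow hInn hI2 (by positivity)
    have h2 : ((2:ℝ)*IA) ^ ((2:ℝ)/α) = 2 ^ ((2:ℝ)/α) * IA ^ ((2:ℝ)/α) :=
      Real.mul_rpow (by norm_num) hIA0
    calc M' * I ^ ((2:ℝ)/α) ≤ M' * (2 ^ ((2:ℝ)/α) * IA ^ ((2:ℝ)/α)) :=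
          mul_le_mul_of_nonneg_left (h1.trans_eq h2) hM'.le
      _ ≤ M' * (2 ^ ((2:ℝ)/α) * (J * cT)) := by
          exact mul_le_mul_of_nonneg_left (mul_le_mul_of_nonneg_left hIA2 h2α.le) hM'.le
      _ = C * J := by rw [hCdef]; ring
      _ ≤ ∫ t in S, G (v t) := hGA
      _ ≤ ∫ t in Set.Ioc 0 T, G (v t) := by rw [← hsplitG]; linarith
  · -- the large part dominates
    have hIB2 : I ≤ 2 * IB := by linarith
    have hIBpos : 0 < IB := by linarith
    have hIB_r : IB ≤ r ^ α := by linarith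
    have hkey : IB ^ ((2:ℝ)/α) ≤ r ^ (2-α) * IB := by
      have e4 : IB ^ ((2:ℝ)/α) = IB ^ ((2-α)/α) * IB := by
        rw [show (2:ℝ)/α = (2-α)/α + 1 by field_simp; ring, Real.rpow_add hIBpos, Real.rpow_one]
      have h5 : IB ^ ((2-α)/α) ≤ (r ^ α) ^ ((2-α)/α) :=
        Real.rpow_le_rpow hIB0 hIB_r (div_nonneg (by linarith) hα0.le)
      have h6 : ((r:ℝ) ^ α) ^ ((2-α)/α) = r ^ (2-α) := by
        rw [← Real.rpow_mul hr.le, mul_div_cancel₀ _ hα0.ne']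
      rw [e4]
      exact mul_le_mul_of_nonneg_right (h6 ▸ h5) hIBpos.le
    have h1 : I ^ ((2:ℝ)/α) ≤ (2*IB) ^ ((2:ℝ)/α) :=
      Real.rpow_le_rpow hInn hIB2 (by positivity)
    have h2 : ((2:ℝ)*IB) ^ ((2:ℝ)/α) = 2 ^ ((2:ℝ)/α) * IB ^ ((2:ℝ)/α) :=
      Real.mul_rpow (by norm_num) hIB0
    calc M' * I ^ ((2:ℝ)/α) ≤ M' * (2 ^ ((2:ℝ)/α) * IB ^ ((2:ℝ)/α)) :=
          mul_le_mul_of_nonneg_left (h1.trans_eq h2) hM'.le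
      _ ≤ M' * (2 ^ ((2:ℝ)/α) * (r ^ (2-α) * IB)) := by
          exact mul_le_mul_of_nonneg_left (mul_le_mul_of_nonneg_left hkey h2α.le) hM'.le
      _ = (M' * 2 ^ ((2:ℝ)/α) * r ^ (2-α)) * IB := by ring
      _ = c * IB := by rw [hrkey]
      _ ≤ ∫ t in S', G (v t) := hGB
      _ ≤ ∫ t in Set.Ioc 0 T, G (v t) := by rw [← hsplitG]; linarith
end
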